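/- arXiv:2208.10370 — 2 statements merged into one kernel-verified Lean document; each statement's English description precedes it below -/
import Mathlib

section
/- Let ℓ, m ≥ 2 be integers and let T be a hypertree with at most ℓ leaf edges. Then there exist pairwise edge-disjoint semi-bare paths P₁, P₂, …, P_s in T, each of length m+1, such that e(T − P₁ − P₂ − ⋯ − P_s) ≤ 6mℓ + 2e(T)/(m+1), where e(·) denotes the number of edges. -/
/-! Common definitions for 3-uniform hypergraphs, given as a finite set of edges
(each edge a 3-element `Finset`) on a vertex type `V`. -/

variable {V : Type*}

/-- The set of vertices covered by the edges of a 3-graph `H`. -/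
def hVerts [DecidableEq V] (H : Finset (Finset V)) : Finset V := H.biUnion id

/-- `H` is a 3-uniform hypergraph (a 3-graph): every edge has exactly 3 vertices. -/
def ThreeUniform (H : Finset (Finset V)) : Prop := ∀ e ∈ H, e.card = 3

/-- A 3-graph is linear if every pair of distinct edges shares at most one vertex. -/
def LinearTriple [DecidableEq V] (H : Finset (Finset V)) : Prop :=
  ∀ e ∈ H, ∀ f ∈ H, e ≠ f → (e ∩ f).card ≤ 1

/-- A Steiner triple system: a 3-graph in which every pair of distinct vertices is
contained in exactly one edge. -/
def IsSteiner [DecidableEq V] (G : Finset (Finset V)) : Prop :=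
  ThreeUniform G ∧ ∀ a b : V, a ≠ b → ∃! e, e ∈ G ∧ a ∈ e ∧ b ∈ e

/-- Degree of a vertex in a 3-graph: the number of edges containing it. -/
def degH [DecidableEq V] (H : Finset (Finset V)) (x : V) : ℕ :=
  (H.filter fun e => x ∈ e).card

/-- Data for a path of length `len` in a linear 3-graph: vertices
`v 0, …, v len` and `u 1, …, u len`; the edges are `{v i, u (i+1), v (i+1)}`
for `i = 0, …, len - 1`.  (Values of `v`, `u` outside these index ranges are ignored.) -/
structure HPath (V : Type*) where
  len : ℕ
  v : ℕ → V
  u : ℕ → V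

/-- The `i`-th edge of a path. -/
def HPath.edgeAt [DecidableEq V] (P : HPath V) (i : ℕ) : Finset V :=
  {P.v i, P.u (i + 1), P.v (i + 1)}

/-- `P` is a path in the 3-graph `H`: all its `2·len + 1` vertices are distinct and
all its edges belong to `H`. -/
def HPath.IsPathIn [DecidableEq V] (P : HPath V) (H : Finset (Finset V)) : Prop :=
  (∀ i < P.len, P.edgeAt i ∈ H) ∧
  Set.InjOn P.v (Set.Iic P.len) ∧
  Set.InjOn P.u (Set.Icc 1 P.len) ∧
  ∀ i ≤ P.len, ∀ j, 1 ≤ j → j ≤ P.len → P.v i ≠ P.u j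

/-- The vertex set of a path. -/
def HPath.verts [DecidableEq V] (P : HPath V) : Finset V :=
  (Finset.range (P.len + 1)).image P.v ∪ (Finset.Icc 1 P.len).image P.u

/-- The edge set of a path. -/
def HPath.edgeSet [DecidableEq V] (P : HPath V) : Finset (Finset V) :=
  (Finset.range P.len).image P.edgeAt

/-- `P` is an `a`–`b` path: it has length at least 1, `a` is chosen from the end pair
`{v 0, u 1}` and `b` is chosen from the end pair `{u len, v len}`. -/
def HPath.Connects (P : HPath V) (a b : V) : Prop :=
  1 ≤ P.len ∧ (a = P.v 0 ∨ a = P.u 1) ∧ (b = P.v P.len ∨ b = P.u P.len)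

/-- There is a path between `a` and `b` in `H`, and it is unique (any two such paths
have the same edge set). -/
def ConnectsUniquely [DecidableEq V] (H : Finset (Finset V)) (a b : V) : Prop :=
  (∃ P : HPath V, P.IsPathIn H ∧ P.Connects a b) ∧
  ∀ P Q : HPath V, P.IsPathIn H → P.Connects a b → Q.IsPathIn H → Q.Connects a b →
    P.edgeSet = Q.edgeSet

/-- A hypertree: a connected linear 3-graph in which any two distinct vertices are
connected by a unique path. -/
def IsHypertree [DecidableEq V] (H : Finset (Finset V)) : Prop :=
  ThreeUniform H ∧ LinearTriple H ∧ ∀ a b : V, a ≠ b → ConnectsUniquely H a b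

/-- A leaf of a 3-graph `H`: a vertex of degree one whose (unique) edge contains
another vertex of degree one. -/
def IsLeaf [DecidableEq V] (H : Finset (Finset V)) (x : V) : Prop :=
  degH H x = 1 ∧ ∃ e ∈ H, x ∈ e ∧ ∃ y ∈ e, y ≠ x ∧ degH H y = 1

/-- A star with center `v`: a set of 3-element edges, each containing `v`, whose
pairwise intersections are exactly `{v}`. Its size is the number of its edges. -/
def IsStar [DecidableEq V] (S : Finset (Finset V)) (v : V) : Prop :=
  (∀ e ∈ S, e.card = 3 ∧ v ∈ e) ∧ ∀ e ∈ S, ∀ f ∈ S, e ≠ f → e ∩ f = {v}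

/-- A matching: a collection of pairwise disjoint edges. -/
def IsMatching [DecidableEq V] (M : Finset (Finset V)) : Prop :=
  ∀ e ∈ M, ∀ f ∈ M, e ≠ f → Disjoint e f

/-- `X` is a matching leaf set of `H`: `X` is precisely the set of leaves of `H`
covered by some matching consisting of leaf edges of `H`. -/
def IsMatchingLeafSet [DecidableEq V] (H : Finset (Finset V)) (X : Finset V) : Prop :=
  ∃ M ⊆ H, IsMatching M ∧ (∀ e ∈ M, ∃ x ∈ e, IsLeaf H x) ∧
    ∀ x : V, x ∈ X ↔ x ∈ hVerts M ∧ IsLeaf H x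

/-- A singleton-pair partition of the vertex set: a partition into parts of size 1 or 2. -/
def IsSingletonPairPartition [DecidableEq V] [Fintype V] (U : Finset (Finset V)) : Prop :=
  (∀ P ∈ U, 1 ≤ P.card ∧ P.card ≤ 2) ∧
  (∀ P ∈ U, ∀ Q ∈ U, P ≠ Q → Disjoint P Q) ∧
  U.biUnion id = Finset.univ

/-- The probability, when each part of `U` is included independently with probability `p`
(the included parts forming `S`), that the chosen subfamily `S` lies in the event `E`. -/
noncomputable def probOf (U : Finset (Finset V)) (p : ℝ)
    (E : Set (Finset (Finset V))) : ℝ :=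
  ∑ S ∈ U.powerset, E.indicator (fun S => p ^ S.card * (1 - p) ^ (U.card - S.card)) S

/-- `e(A, B, C)`: the number of edges `{x, y, z}` of `G` with `x ∈ A`, `y ∈ B`, `z ∈ C`. -/
def eCount [DecidableEq V] (G : Finset (Finset V)) (A B C : Finset V) : ℕ :=
  (G.filter fun e => ∃ x ∈ A, ∃ y ∈ B, ∃ z ∈ C, e = {x, y, z}).card

namespace Stmt10Aux

variable {V : Type} [DecidableEq V]

/-! ### Basic degree lemmas -/

lemma degH_pos {H : Finset (Finset V)} {e : Finset V} {x : V} (he : e ∈ H) (hx : x ∈ e) :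
    1 ≤ degH H x := by
  have : e ∈ H.filter fun f => x ∈ f := Finset.mem_filter.mpr ⟨he, hx⟩
  exact Finset.card_pos.mpr ⟨e, this⟩ 

lemma degH_two_le {H : Finset (Finset V)} {e f : Finset V} {x : V} (he : e ∈ H) (hf : f ∈ H)
    (hef : e ≠ f) (hxe : x ∈ e) (hxf : x ∈ f) : 2 ≤ degH H x := by
  have h : ({e, f} : Finset (Finset V)) ⊆ H.filter fun g => x ∈ g := by
    intro g hg
    rcases Finset.mem_insert.mp hg with h | h
    · subst h; exact Finset.mem_filter.mpr ⟨he, hxe⟩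
    · rw [Finset.mem_singleton] at h
      subst h; exact Finset.mem_filter.mpr ⟨hf, hxf⟩
  have h2 := Finset.card_le_card h
  rw [Finset.card_pair hef] at h2
  exact h2

/-- A vertex of degree 1 lies in a unique edge. -/
lemma eq_of_deg_one {H : Finset (Finset V)} {e f : Finset V} {x : V} (hd : degH H x = 1)
    (he : e ∈ H) (hf : f ∈ H) (hxe : x ∈ e) (hxf : x ∈ f) : e = f := by
  by_contra hne
  have := degH_two_le he hf hne hxe hxf
  omega

/-- For a vertex of degree 2, the filter of edges containing it is the pair. -/
lemma filter_eq_pair_of_deg_two {H : Finset (Finset V)} {e f : Finset V} {x : V}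
    (hd : degH H x = 2) (he : e ∈ H) (hf : f ∈ H) (hef : e ≠ f) (hxe : x ∈ e) (hxf : x ∈ f) :
    H.filter (fun g => x ∈ g) = {e, f} := by
  have h : ({e, f} : Finset (Finset V)) ⊆ H.filter fun g => x ∈ g := by
    intro g hg
    rcases Finset.mem_insert.mp hg with h | h
    · subst h; exact Finset.mem_filter.mpr ⟨he, hxe⟩
    · rw [Finset.mem_singleton] at h
      subst h; exact Finset.mem_filter.mpr ⟨hf, hxf⟩
  refine (Finset.eq_of_subset_of_card_le h ?_).symm
  rw [Finset.card_pair hef]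
  exact le_of_eq hd

lemma eq_or_eq_of_deg_two {H : Finset (Finset V)} {e f g : Finset V} {x : V}
    (hd : degH H x = 2) (he : e ∈ H) (hf : f ∈ H) (hef : e ≠ f) (hxe : x ∈ e) (hxf : x ∈ f)
    (hg : g ∈ H) (hxg : x ∈ g) : g = e ∨ g = f := by
  have := filter_eq_pair_of_deg_two hd he hf hef hxe hxf
  have hmem : g ∈ H.filter (fun g => x ∈ g) := Finset.mem_filter.mpr ⟨hg, hxg⟩
  rw [this] at hmem
  simpa using hmem

/-! ### Triples -/

lemma three_mem {e : Finset V} (h3 : e.card = 3) {a b : V} (ha : a ∈ e) (hb : b ∈ e)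
    (hab : a ≠ b) : ∃ c, c ∈ e ∧ c ≠ a ∧ c ≠ b ∧ e = {a, b, c} := by
  have hsub : ({a, b} : Finset V) ⊆ e := by
    intro x hx; rcases Finset.mem_insert.mp hx with h | h
    · subst h; exact ha
    · rw [Finset.mem_singleton] at h; subst h; exact hb
  have hcd : (e \ {a, b}).card = 1 := by
    rw [Finset.card_sdiff_of_subset hsub, h3, Finset.card_pair hab]
  obtain ⟨c, hc⟩ := Finset.card_eq_one.mp hcd
  have hcmem : c ∈ e \ ({a, b} : Finset V) := by rw [hc]; exact Finset.mem_singleton_self c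
  have hce : c ∈ e := (Finset.mem_sdiff.mp hcmem).1
  have hcn : c ∉ ({a, b} : Finset V) := (Finset.mem_sdiff.mp hcmem).2
  refine ⟨c, hce, fun h => hcn (by simp [h]), fun h => hcn (by simp [h]), ?_⟩
  apply Finset.Subset.antisymm
  · intro x hx
    by_cases hxa : x ∈ ({a, b} : Finset V)
    · simp at hxa ⊢; tauto
    · have : x ∈ e \ ({a, b} : Finset V) := Finset.mem_sdiff.mpr ⟨hx, hxa⟩
      rw [hc] at this; simp at this ⊢; tauto
  · intro x hx
    simp at hx
    rcases hx with h | h | h <;> subst h <;> assumption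

lemma eq_triple_of_subset {e : Finset V} (h3 : e.card = 3) {a b c : V} (ha : a ∈ e)
    (hb : b ∈ e) (hc : c ∈ e) (hab : a ≠ b) (hac : a ≠ c) (hbc : b ≠ c) :
    e = {a, b, c} := by
  have hsub : ({a, b, c} : Finset V) ⊆ e := by
    intro x hx; simp at hx; rcases hx with h | h | h <;> subst h <;> assumption
  have hcard : ({a, b, c} : Finset V).card = 3 := by
    rw [Finset.card_insert_of_notMem (by simp [hab, hac]),
      Finset.card_insert_of_notMem (by simp [hbc]), Finset.card_singleton]
  exact (Finset.eq_of_subset_of_card_le hsub (by rw [h3, hcard])).symm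

end Stmt10Aux

namespace Stmt10Aux

variable {V : Type} [DecidableEq V]

/-! ### Path utilities -/

lemma mem_verts_v {P : HPath V} {t : ℕ} (ht : t ≤ P.len) : P.v t ∈ P.verts := by
  apply Finset.mem_union_left
  exact Finset.mem_image.mpr ⟨t, Finset.mem_range.mpr (by omega), rfl⟩

lemma mem_verts_u {P : HPath V} {j : ℕ} (h1 : 1 ≤ j) (hj : j ≤ P.len) : P.u j ∈ P.verts := by
  apply Finset.mem_union_right
  exact Finset.mem_image.mpr ⟨j, Finset.mem_Icc.mpr ⟨h1, hj⟩, rfl⟩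

lemma verts_cases {P : HPath V} {x : V} (hx : x ∈ P.verts) :
    (∃ t, t ≤ P.len ∧ x = P.v t) ∨ (∃ j, 1 ≤ j ∧ j ≤ P.len ∧ x = P.u j) := by
  rcases Finset.mem_union.mp hx with h | h
  · obtain ⟨t, ht, rfl⟩ := Finset.mem_image.mp h
    have := Finset.mem_range.mp ht
    exact Or.inl ⟨t, by omega, rfl⟩
  · obtain ⟨j, hj, rfl⟩ := Finset.mem_image.mp h
    have := Finset.mem_Icc.mp hj
    exact Or.inr ⟨j, this.1, this.2, rfl⟩

lemma mem_edgeAt_left (P : HPath V) (i : ℕ) : P.v i ∈ P.edgeAt i := by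
  simp [HPath.edgeAt]

lemma mem_edgeAt_mid (P : HPath V) (i : ℕ) : P.u (i + 1) ∈ P.edgeAt i := by
  simp [HPath.edgeAt]

lemma mem_edgeAt_right (P : HPath V) (i : ℕ) : P.v (i + 1) ∈ P.edgeAt i := by
  simp [HPath.edgeAt]

lemma mem_edgeAt_iff (P : HPath V) (i : ℕ) {x : V} :
    x ∈ P.edgeAt i ↔ x = P.v i ∨ x = P.u (i + 1) ∨ x = P.v (i + 1) := by
  simp [HPath.edgeAt]

lemma mem_edgeSet_iff {P : HPath V} {e : Finset V} :
    e ∈ P.edgeSet ↔ ∃ i, i < P.len ∧ e = P.edgeAt i := by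
  constructor
  · intro h
    obtain ⟨i, hi, rfl⟩ := Finset.mem_image.mp h
    exact ⟨i, Finset.mem_range.mp hi, rfl⟩
  · rintro ⟨i, hi, rfl⟩
    exact Finset.mem_image.mpr ⟨i, Finset.mem_range.mpr hi, rfl⟩

lemma edgeAt_mem_of_path {H : Finset (Finset V)} {P : HPath V} (hP : P.IsPathIn H) {i : ℕ}
    (hi : i < P.len) : P.edgeAt i ∈ H := hP.1 i hi

/-- distinct vertex helper: `u (j+1) ∉ edgeAt i` for `i ≠ j`. -/
lemma u_not_mem_edgeAt {H : Finset (Finset V)} {P : HPath V} (hP : P.IsPathIn H) {i j : ℕ}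
    (hi : i < P.len) (hj : j < P.len) (hij : i ≠ j) : P.u (j + 1) ∉ P.edgeAt i := by
  obtain ⟨-, hv, hu, hvu⟩ := hP
  intro hmem
  rcases (mem_edgeAt_iff P i).mp hmem with h | h | h
  · exact hvu i (by omega) (j+1) (by omega) (by omega) h.symm
  · have := hu (Set.mem_Icc.mpr ⟨by omega, by omega⟩) (Set.mem_Icc.mpr ⟨by omega, by omega⟩) h.symm
    omega
  · exact hvu (i+1) (by omega) (j+1) (by omega) (by omega) h.symm

lemma edgeAt_injOn {H : Finset (Finset V)} {P : HPath V} (hP : P.IsPathIn H) {i j : ℕ}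
    (hi : i < P.len) (hj : j < P.len) (hij : i ≠ j) : P.edgeAt i ≠ P.edgeAt j := by
  intro h
  exact u_not_mem_edgeAt hP hi hj hij (h ▸ mem_edgeAt_mid P j)

lemma card_edgeSet {H : Finset (Finset V)} {P : HPath V} (hP : P.IsPathIn H) :
    P.edgeSet.card = P.len := by
  rw [HPath.edgeSet, Finset.card_image_of_injOn, Finset.card_range]
  intro i hi j hj hij
  by_contra hne
  exact edgeAt_injOn hP (Finset.mem_range.mp hi) (Finset.mem_range.mp hj) hne hij

lemma edgeSet_subset {H : Finset (Finset V)} {P : HPath V} (hP : P.IsPathIn H) :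
    P.edgeSet ⊆ H := by
  intro e he
  obtain ⟨i, hi, rfl⟩ := mem_edgeSet_iff.mp he
  exact hP.1 i hi

lemma len_le_card {H : Finset (Finset V)} {P : HPath V} (hP : P.IsPathIn H) :
    P.len ≤ H.card := by
  rw [← card_edgeSet hP]
  exact Finset.card_le_card (edgeSet_subset hP)

/-- A single edge gives a path of length 1. -/
lemma single_path {H : Finset (Finset V)} (h3 : ThreeUniform H) {e : Finset V} (he : e ∈ H)
    {a b : V} (ha : a ∈ e) (hb : b ∈ e) (hab : a ≠ b) :
    ∃ P : HPath V, P.IsPathIn H ∧ P.Connects a b ∧ P.edgeSet = {e} ∧ P.len = 1 ∧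
      P.v 0 = a ∧ P.v 1 = b := by
  obtain ⟨c, hc, hca, hcb, hecab⟩ := three_mem (h3 e he) ha hb hab
  refine ⟨⟨1, fun t => if t = 0 then a else b, fun _ => c⟩, ?_, ?_, ?_, rfl, rfl, rfl⟩
  · refine ⟨?_, ?_, ?_, ?_⟩
    · intro i hi
      interval_cases i
      have h1 : HPath.edgeAt ⟨1, fun t => if t = 0 then a else b, fun _ => c⟩ 0 = {a, c, b} := rfl
      have h2 : ({a, c, b} : Finset V) = e := by
        rw [hecab]; ext x; simp; tauto
      rw [h1, h2]; exact he
    · intro s hs t ht hst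
      simp only [Set.mem_Iic] at hs ht
      interval_cases s <;> interval_cases t <;> simp_all
    · intro s hs t ht hst
      simp only [Set.mem_Icc] at hs ht; omega
    · intro i hi j h1 hj
      interval_cases i <;> simp <;> [exact fun h => hca h.symm; exact fun h => hcb h.symm]
  · exact ⟨le_refl 1, Or.inl rfl, Or.inl (by simp)⟩
  · have : HPath.edgeAt ⟨1, fun t => if t = 0 then a else b, fun _ => c⟩ 0 = {a, c, b} := rfl
    rw [HPath.edgeSet]
    simp only [Finset.range_one, Finset.image_singleton, this, hecab]
    congr 1
    ext x; simp; tauto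

/-- Prefix of a path. -/
lemma prefix_path {H : Finset (Finset V)} {P : HPath V} (hP : P.IsPathIn H) {i : ℕ}
    (hi : i ≤ P.len) :
    (⟨i, P.v, P.u⟩ : HPath V).IsPathIn H ∧
      ((⟨i, P.v, P.u⟩ : HPath V)).edgeSet ⊆ P.edgeSet := by
  obtain ⟨hedges, hv, hu, hvu⟩ := hP
  have hQ : (⟨i, P.v, P.u⟩ : HPath V).len = i := rfl
  constructor
  · refine ⟨?_, ?_, ?_, ?_⟩
    · intro j hj
      rw [hQ] at hj
      have : (⟨i, P.v, P.u⟩ : HPath V).edgeAt j = P.edgeAt j := rfl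
      rw [this]; exact hedges j (by omega)
    · exact hv.mono (fun x hx => by simp only [Set.mem_Iic, hQ] at *; omega)
    · exact hu.mono (fun x hx => by simp only [Set.mem_Icc, hQ] at *; omega)
    · intro a ha j h1 hj
      rw [hQ] at ha hj
      exact hvu a (by omega) j h1 (by omega)
  · intro e he
    obtain ⟨j, hj, rfl⟩ := mem_edgeSet_iff.mp he
    rw [hQ] at hj
    exact mem_edgeSet_iff.mpr ⟨j, by omega, rfl⟩

end Stmt10Aux

namespace Stmt10Aux

variable {V : Type} [DecidableEq V]

lemma mem_hVerts {H : Finset (Finset V)} {e : Finset V} {x : V} (he : e ∈ H) (hx : x ∈ e) :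
    x ∈ hVerts H := Finset.mem_biUnion.mpr ⟨e, he, hx⟩

/-- A subtree: like a hypertree but connectivity only required on covered vertices. -/
def IsSubtree (H : Finset (Finset V)) : Prop :=
  ThreeUniform H ∧ LinearTriple H ∧
    ∀ a b : V, a ∈ hVerts H → b ∈ hVerts H → a ≠ b → ConnectsUniquely H a b

lemma isSubtree_of_isHypertree {H : Finset (Finset V)} (h : IsHypertree H) : IsSubtree H :=
  ⟨h.1, h.2.1, fun a b _ _ hab => h.2.2 a b hab⟩

/-- Swapping the two start vertices of a path. -/
lemma swap_path {H : Finset (Finset V)} {P : HPath V} (hP : P.IsPathIn H) (h1 : 1 ≤ P.len) :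
    ∃ Q : HPath V, Q.IsPathIn H ∧ Q.len = P.len ∧ Q.v 0 = P.u 1 ∧ Q.u 1 = P.v 0 ∧
      Q.edgeAt 0 = P.edgeAt 0 := by
  obtain ⟨hedges, hv, hu, hvu⟩ := hP
  set Q : HPath V := ⟨P.len, fun t => if t = 0 then P.u 1 else P.v t,
    fun j => if j = 1 then P.v 0 else P.u j⟩ with hQdef
  have hQlen : Q.len = P.len := rfl
  have hQv0 : Q.v 0 = P.u 1 := rfl
  have hQu1 : Q.u 1 = P.v 0 := rfl
  have hQvt : ∀ t, t ≠ 0 → Q.v t = P.v t := by intro t ht; simp [hQdef, ht]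
  have hQuj : ∀ j, j ≠ 1 → Q.u j = P.u j := by intro j hj; simp [hQdef, hj]
  have hedge0 : Q.edgeAt 0 = P.edgeAt 0 := by
    have : Q.edgeAt 0 = {P.u 1, P.v 0, P.v 1} := by
      rw [HPath.edgeAt, hQv0, hQu1, hQvt 1 one_ne_zero]
    rw [this, HPath.edgeAt]
    ext x; simp; tauto
  have hedgei : ∀ i, i ≠ 0 → Q.edgeAt i = P.edgeAt i := by
    intro i hi
    rw [HPath.edgeAt, HPath.edgeAt, hQvt i hi, hQvt (i+1) (by omega), hQuj (i+1) (by omega)]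
  refine ⟨Q, ⟨?_, ?_, ?_, ?_⟩, hQlen, hQv0, hQu1, hedge0⟩
  · intro i hi
    rw [hQlen] at hi
    rcases Nat.eq_zero_or_pos i with h | h
    · rw [h, hedge0]; exact hedges 0 (by omega)
    · rw [hedgei i (by omega)]; exact hedges i hi
  · intro s hs t ht hst
    simp only [Set.mem_Iic, hQlen] at hs ht
    rcases Nat.eq_zero_or_pos s with h's | h's <;> rcases Nat.eq_zero_or_pos t with h't | h't
    · omega
    · exfalso
      rw [h's, hQv0, hQvt t (by omega)] at hst
      exact hvu t (by omega) 1 le_rfl h1 hst.symm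
    · exfalso
      rw [h't, hQv0, hQvt s (by omega)] at hst
      exact hvu s (by omega) 1 le_rfl h1 hst
    · rw [hQvt s (by omega), hQvt t (by omega)] at hst
      exact hv (Set.mem_Iic.mpr hs) (Set.mem_Iic.mpr ht) hst
  · intro s hs t ht hst
    simp only [Set.mem_Icc, hQlen] at hs ht
    rcases Nat.eq_or_lt_of_le hs.1 with h's | h's <;> rcases Nat.eq_or_lt_of_le ht.1 with h't | h't
    · omega
    · exfalso
      rw [← h's, hQu1, hQuj t (by omega)] at hst
      exact hvu 0 (by omega) t (by omega) ht.2 hst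
    · exfalso
      rw [← h't, hQu1, hQuj s (by omega)] at hst
      exact hvu 0 (by omega) s (by omega) hs.2 hst.symm
    · rw [hQuj s (by omega), hQuj t (by omega)] at hst
      exact hu (Set.mem_Icc.mpr ⟨by omega, hs.2⟩) (Set.mem_Icc.mpr ⟨by omega, ht.2⟩) hst
  · intro i hi j hj1 hj2
    rw [hQlen] at hi hj2
    rcases Nat.eq_zero_or_pos i with h'i | h'i <;> rcases Nat.eq_or_lt_of_le hj1 with h'j | h'j
    · rw [h'i, hQv0, ← h'j, hQu1]
      intro h
      exact hvu 0 (by omega) 1 le_rfl h1 h.symm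
    · rw [h'i, hQv0, hQuj j (by omega)]
      intro h
      have := hu (Set.mem_Icc.mpr ⟨le_rfl, h1⟩) (Set.mem_Icc.mpr ⟨by omega, hj2⟩) h
      omega
    · rw [hQvt i (by omega), ← h'j, hQu1]
      intro h
      have := hv (Set.mem_Iic.mpr (by omega : i ≤ P.len)) (Set.mem_Iic.mpr (by omega : 0 ≤ P.len)) h
      omega
    · rw [hQvt i (by omega), hQuj j (by omega)]
      exact hvu i (by omega) j (by omega) hj2

/-- Prepending an edge to a path. -/
lemma prepend_path {H : Finset (Finset V)} {P : HPath V} (hP : P.IsPathIn H) {f : Finset V}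
    {a b : V} (hf : f ∈ H) (hfeq : f = {a, b, P.v 0}) (hab : a ≠ b) (ha0 : a ≠ P.v 0)
    (hb0 : b ≠ P.v 0) (haP : a ∉ P.verts) (hbP : b ∉ P.verts) :
    ∃ Q : HPath V, Q.IsPathIn H ∧ Q.len = P.len + 1 := by
  obtain ⟨hedges, hv, hu, hvu⟩ := hP
  set Q : HPath V := ⟨P.len + 1, fun t => if t = 0 then a else P.v (t - 1),
    fun j => if j ≤ 1 then b else P.u (j - 1)⟩ with hQdef
  have hQlen : Q.len = P.len + 1 := rfl
  have hQv0 : Q.v 0 = a := rfl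
  have hQvt : ∀ t, t ≠ 0 → Q.v t = P.v (t - 1) := by intro t ht; simp [hQdef, ht]
  have hQu1 : Q.u 1 = b := rfl
  have hQuj : ∀ j, 2 ≤ j → Q.u j = P.u (j - 1) := by
    intro j hj; simp only [hQdef]; rw [if_neg (by omega)]
  refine ⟨Q, ⟨?_, ?_, ?_, ?_⟩, hQlen⟩
  · intro i hi
    rw [hQlen] at hi
    rcases Nat.eq_zero_or_pos i with h | h
    · have : Q.edgeAt 0 = {a, b, P.v 0} := by
        rw [HPath.edgeAt, hQv0, hQu1, hQvt 1 one_ne_zero]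
      rw [h, this, ← hfeq]; exact hf
    · obtain ⟨j, rfl⟩ : ∃ j, i = j + 1 := ⟨i - 1, by omega⟩
      have : Q.edgeAt (j + 1) = P.edgeAt j := by
        rw [HPath.edgeAt, HPath.edgeAt, hQvt (j+1) (by omega), hQvt (j+2) (by omega),
          hQuj (j+2) (by omega)]
        norm_num
      rw [this]; exact hedges _ (by omega)
  · intro s hs t ht hst
    simp only [Set.mem_Iic, hQlen] at hs ht
    rcases Nat.eq_zero_or_pos s with h's | h's <;> rcases Nat.eq_zero_or_pos t with h't | h't
    · omega
    · exfalso
      rw [h's, hQv0, hQvt t (by omega)] at hst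
      exact haP (hst ▸ mem_verts_v (by omega))
    · exfalso
      rw [h't, hQv0, hQvt s (by omega)] at hst
      exact haP (hst ▸ mem_verts_v (by omega))
    · rw [hQvt s (by omega), hQvt t (by omega)] at hst
      have := hv (Set.mem_Iic.mpr (by omega : s - 1 ≤ P.len))
        (Set.mem_Iic.mpr (by omega : t - 1 ≤ P.len)) hst
      omega
  · intro s hs t ht hst
    simp only [Set.mem_Icc, hQlen] at hs ht
    rcases Nat.lt_or_ge s 2 with h's | h's <;> rcases Nat.lt_or_ge t 2 with h't | h't
    · omega
    · exfalso
      have hs1 : s = 1 := by omega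
      rw [hs1, hQu1, hQuj t (by omega)] at hst
      exact hbP (hst ▸ mem_verts_u (by omega) (by omega))
    · exfalso
      have ht1 : t = 1 := by omega
      rw [ht1, hQu1, hQuj s (by omega)] at hst
      exact hbP (hst ▸ mem_verts_u (by omega) (by omega))
    · rw [hQuj s (by omega), hQuj t (by omega)] at hst
      have := hu (Set.mem_Icc.mpr (by omega : 1 ≤ s - 1 ∧ s - 1 ≤ P.len))
        (Set.mem_Icc.mpr (by omega : 1 ≤ t - 1 ∧ t - 1 ≤ P.len)) hst
      omega
  · intro i hi j hj1 hj2
    rw [hQlen] at hi hj2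
    rcases Nat.eq_zero_or_pos i with h'i | h'i <;> rcases Nat.lt_or_ge j 2 with h'j | h'j
    · have hj1' : j = 1 := by omega
      rw [h'i, hQv0, hj1', hQu1]; exact hab
    · rw [h'i, hQv0, hQuj j (by omega)]
      intro h
      exact haP (h ▸ mem_verts_u (by omega) (by omega))
    · have hj1' : j = 1 := by omega
      rw [hQvt i (by omega), hj1', hQu1]
      intro h
      rcases Nat.eq_or_lt_of_le h'i with h1 | h1
      · rw [← h1] at h; simp at h; exact hb0 h.symm
      · exact hbP (h ▸ mem_verts_v (by omega))
    · rw [hQvt i (by omega), hQuj j (by omega)]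
      exact hvu (i - 1) (by omega) (j - 1) (by omega) (by omega)

end Stmt10Aux

namespace Stmt10Aux

variable {V : Type} [DecidableEq V]

lemma exists_other_edge {H : Finset (Finset V)} {e : Finset V} {x : V} (hd : 2 ≤ degH H x)
    (he : e ∈ H) (hx : x ∈ e) : ∃ f ∈ H, x ∈ f ∧ f ≠ e := by
  have h1 : e ∈ H.filter (fun g => x ∈ g) := Finset.mem_filter.mpr ⟨he, hx⟩
  have h2 : 0 < ((H.filter (fun g => x ∈ g)).erase e).card := by
    have := Finset.card_erase_of_mem h1
    have : degH H x - 1 ≤ ((H.filter (fun g => x ∈ g)).erase e).card := by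
      rw [this]; exact le_refl _
    omega
  obtain ⟨f, hf⟩ := Finset.card_pos.mp h2
  have hne := Finset.ne_of_mem_erase hf
  have hfm := Finset.mem_of_mem_erase hf
  exact ⟨f, (Finset.mem_filter.mp hfm).1, (Finset.mem_filter.mp hfm).2, hne⟩

/-- The first vertex of a maximum-length path has degree 1. -/
lemma end_deg_one {H : Finset (Finset V)} (hsub : IsSubtree H) {P : HPath V}
    (hP : P.IsPathIn H) (h1 : 1 ≤ P.len)
    (hmax : ∀ Q : HPath V, Q.IsPathIn H → Q.len ≤ P.len) : degH H (P.v 0) = 1 := by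
  obtain ⟨h3, hlin, hconn⟩ := hsub
  have he0 : P.edgeAt 0 ∈ H := hP.1 0 (by omega)
  have hv0e : P.v 0 ∈ P.edgeAt 0 := mem_edgeAt_left P 0
  have hd1 : 1 ≤ degH H (P.v 0) := degH_pos he0 hv0e
  by_contra hne
  have hd2 : 2 ≤ degH H (P.v 0) := by omega
  obtain ⟨f, hfH, hv0f, hffe⟩ := exists_other_edge hd2 he0 hv0e
  have hfcard : (f.erase (P.v 0)).card = 2 := by
    rw [Finset.card_erase_of_mem hv0f, h3 f hfH]
  obtain ⟨a, b, hab, hfe⟩ := Finset.card_eq_two.mp hfcard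
  have ha : a ∈ f.erase (P.v 0) := by rw [hfe]; simp
  have hb : b ∈ f.erase (P.v 0) := by rw [hfe]; simp
  -- no vertex of `f.erase (P.v 0)` lies on `P`
  have no_touch : ∀ w ∈ f.erase (P.v 0), w ∉ P.verts := by
    intro w hw hwP
    have hwv0 : w ≠ P.v 0 := Finset.ne_of_mem_erase hw
    have hwf : w ∈ f := Finset.mem_of_mem_erase hw
    have hv0mem : P.v 0 ∈ hVerts H := mem_hVerts he0 hv0e
    have hwmem : w ∈ hVerts H := mem_hVerts hfH hwf
    obtain ⟨Q2, hQ2path, hQ2conn, hQ2es, hQ2len, _, _⟩ :=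
      single_path h3 hfH hv0f hwf (Ne.symm hwv0)
    rcases verts_cases hwP with ⟨t, ht, hwt⟩ | ⟨j, hj1, hj2, hwj⟩
    · have ht0 : t ≠ 0 := by
        intro h; rw [h] at hwt; exact hwv0 hwt
      obtain ⟨hQ1path, hQ1sub⟩ := prefix_path hP ht
      have hQ1conn : (⟨t, P.v, P.u⟩ : HPath V).Connects (P.v 0) w :=
        ⟨by show 1 ≤ t; omega, Or.inl rfl, Or.inl hwt⟩
      have hueq := (hconn (P.v 0) w hv0mem hwmem (Ne.symm hwv0)).2 _ _ hQ1path hQ1conn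
        hQ2path hQ2conn
      have hP0mem : P.edgeAt 0 ∈ (⟨t, P.v, P.u⟩ : HPath V).edgeSet :=
        mem_edgeSet_iff.mpr ⟨0, by show 0 < t; omega, rfl⟩
      rw [hueq, hQ2es] at hP0mem
      exact hffe (Finset.mem_singleton.mp hP0mem).symm
    · obtain ⟨hQ1path, hQ1sub⟩ := prefix_path hP hj2
      have hQ1conn : (⟨j, P.v, P.u⟩ : HPath V).Connects (P.v 0) w :=
        ⟨by show 1 ≤ j; omega, Or.inl rfl, Or.inr hwj⟩
      have hueq := (hconn (P.v 0) w hv0mem hwmem (Ne.symm hwv0)).2 _ _ hQ1path hQ1conn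
        hQ2path hQ2conn
      have hP0mem : P.edgeAt 0 ∈ (⟨j, P.v, P.u⟩ : HPath V).edgeSet :=
        mem_edgeSet_iff.mpr ⟨0, by show 0 < j; omega, rfl⟩
      rw [hueq, hQ2es] at hP0mem
      exact hffe (Finset.mem_singleton.mp hP0mem).symm
  -- so we can prepend f to P, contradicting maximality
  have ha0 : a ≠ P.v 0 := Finset.ne_of_mem_erase ha
  have hb0 : b ≠ P.v 0 := Finset.ne_of_mem_erase hb
  have hfeq : f = {a, b, P.v 0} := by
    refine eq_triple_of_subset (h3 f hfH) (Finset.mem_of_mem_erase ha)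
      (Finset.mem_of_mem_erase hb) hv0f hab ha0 hb0
  obtain ⟨Q, hQpath, hQlen⟩ := prepend_path hP hfH hfeq hab ha0 hb0
    (no_touch a ha) (no_touch b hb)
  have := hmax Q hQpath
  omega

/-- Every nonempty subtree has a leaf edge. -/
lemma exists_leaf_edge {H : Finset (Finset V)} (hsub : IsSubtree H) (hne : H.Nonempty) :
    ∃ e ∈ H, ∃ x ∈ e, ∃ y ∈ e, x ≠ y ∧ degH H x = 1 ∧ degH H y = 1 := by
  classical
  obtain ⟨e₀, he₀⟩ := hne
  have h3 := hsub.1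
  have hc3 : e₀.card = 3 := h3 e₀ he₀
  obtain ⟨a, ha⟩ := Finset.card_pos.mp (by omega : 0 < e₀.card)
  have : 0 < (e₀.erase a).card := by rw [Finset.card_erase_of_mem ha]; omega
  obtain ⟨b, hb⟩ := Finset.card_pos.mp this
  obtain ⟨P₀, hP₀path, _, _, hP₀len, _, _⟩ :=
    single_path h3 he₀ ha (Finset.mem_of_mem_erase hb) (Ne.symm (Finset.ne_of_mem_erase hb))
  set Pprop : ℕ → Prop := fun n => ∃ P : HPath V, P.IsPathIn H ∧ P.len = n with hPprop
  have hP1 : Pprop 1 := ⟨P₀, hP₀path, hP₀len⟩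
  have hb1 : 1 ≤ H.card := by
    have := len_le_card hP₀path; omega
  set L := Nat.findGreatest Pprop H.card with hL
  have hL1 : 1 ≤ L := Nat.le_findGreatest hb1 hP1
  have hLspec : Pprop L := Nat.findGreatest_spec hb1 hP1
  obtain ⟨P, hPpath, hPlen⟩ := hLspec
  have hmax : ∀ Q : HPath V, Q.IsPathIn H → Q.len ≤ P.len := by
    intro Q hQ
    by_contra hgt
    have hQb : Q.len ≤ H.card := len_le_card hQ
    have := Nat.findGreatest_is_greatest (by omega : L < Q.len) hQb
    exact this ⟨Q, hQ, rfl⟩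
  have hdx : degH H (P.v 0) = 1 := end_deg_one hsub hPpath (by omega) hmax
  obtain ⟨Q, hQpath, hQlen, hQv0, _, hQe0⟩ := swap_path hPpath (by omega)
  have hmaxQ : ∀ R : HPath V, R.IsPathIn H → R.len ≤ Q.len := by
    intro R hR; rw [hQlen]; exact hmax R hR
  have hdy : degH H (P.u 1) = 1 := by
    rw [← hQv0]
    exact end_deg_one hsub hQpath (by omega) hmaxQ
  refine ⟨P.edgeAt 0, hPpath.1 0 (by omega), P.v 0, mem_edgeAt_left P 0, P.u 1,
    mem_edgeAt_mid P 0, ?_, hdx, hdy⟩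
  exact hPpath.2.2.2 0 (by omega) 1 le_rfl (by omega)

end Stmt10Aux

namespace Stmt10Aux

variable {V : Type} [DecidableEq V]

lemma isPathIn_mono {H H' : Finset (Finset V)} (h : H ⊆ H') {P : HPath V}
    (hP : P.IsPathIn H) : P.IsPathIn H' :=
  ⟨fun i hi => h (hP.1 i hi), hP.2.1, hP.2.2.1, hP.2.2.2⟩

/-- In a subtree with at least two edges, every edge has a vertex of degree ≥ 2. -/
lemma exists_deg_two_vertex {H : Finset (Finset V)} (hsub : IsSubtree H) {e : Finset V}
    (he : e ∈ H) (h2 : 2 ≤ H.card) : ∃ w ∈ e, 2 ≤ degH H w := by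
  obtain ⟨h3, hlin, hconn⟩ := hsub
  by_contra hall
  push_neg at hall
  have hdeg1 : ∀ w ∈ e, degH H w = 1 := by
    intro w hw
    have := degH_pos he hw
    have := hall w hw
    omega
  -- another edge exists
  have : 0 < (H.erase e).card := by
    rw [Finset.card_erase_of_mem he]; omega
  obtain ⟨f, hf⟩ := Finset.card_pos.mp this
  have hfe : f ≠ e := Finset.ne_of_mem_erase hf
  have hfH : f ∈ H := Finset.mem_of_mem_erase hf
  -- f and e are disjoint, else a shared vertex has degree 2
  have hdisj : ∀ w ∈ f, w ∉ e := by
    intro w hwf hwe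
    have := degH_two_le he hfH (Ne.symm hfe) hwe hwf
    have := hdeg1 w hwe
    omega
  obtain ⟨a, ha⟩ := Finset.card_pos.mp (by rw [h3 e he]; omega : 0 < e.card)
  obtain ⟨w, hw⟩ := Finset.card_pos.mp (by rw [h3 f hfH]; omega : 0 < f.card)
  have haw : a ≠ w := fun h => hdisj w hw (h ▸ ha)
  obtain ⟨Q, hQpath, hQconn⟩ :=
    (hconn a w (mem_hVerts he ha) (mem_hVerts hfH hw) haw).1
  obtain ⟨hQlen, hQa, hQw⟩ := hQconn
  have hE0 : Q.edgeAt 0 ∈ H := hQpath.1 0 (by omega)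
  have haE0 : a ∈ Q.edgeAt 0 := by
    rcases hQa with h | h
    · rw [h]; exact mem_edgeAt_left Q 0
    · rw [h]; exact mem_edgeAt_mid Q 0
  have hE0e : Q.edgeAt 0 = e := eq_of_deg_one (hdeg1 a ha) hE0 he haE0 ha
  rcases Nat.eq_or_lt_of_le hQlen with hlen1 | hlen2
  · -- length-1 path: w would lie in e
    apply hdisj w hw
    rw [← hE0e]
    rcases hQw with h | h
    · rw [h, ← hlen1]; exact mem_edgeAt_right Q 0
    · rw [h, ← hlen1]; exact mem_edgeAt_mid Q 0
  · -- length ≥ 2: Q.v 1 has degree ≥ 2 but lies in e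
    have hE1 : Q.edgeAt 1 ∈ H := hQpath.1 1 (by omega)
    have hne : Q.edgeAt 0 ≠ Q.edgeAt 1 := edgeAt_injOn hQpath (by omega) (by omega) (by omega)
    have hv1e : Q.v 1 ∈ e := by rw [← hE0e]; exact mem_edgeAt_right Q 0
    have hdeg := degH_two_le hE0 hE1 hne (mem_edgeAt_right Q 0) (mem_edgeAt_left Q 1)
    rw [show (0:ℕ)+1 = 1 from rfl] at hdeg
    have := hdeg1 _ hv1e
    omega

/-- Removing a leaf edge from a subtree, no path between remaining covered
vertices uses the removed edge. -/
lemma leaf_edge_not_on_path {H : Finset (Finset V)} (hsub : IsSubtree H) {e : Finset V}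
    (he : e ∈ H) {x y : V} (hx : x ∈ e) (hy : y ∈ e) (hxy : x ≠ y)
    (hdx : degH H x = 1) (hdy : degH H y = 1) {a b : V}
    (hax : a ≠ x) (hay : a ≠ y) (hbx : b ≠ x) (hby : b ≠ y) (hab : a ≠ b)
    {Q : HPath V} (hQpath : Q.IsPathIn H) (hQconn : Q.Connects a b) :
    e ∉ Q.edgeSet := by
  obtain ⟨h3, hlin, hconn⟩ := hsub
  intro hmem
  obtain ⟨i, hi, hie⟩ := mem_edgeSet_iff.mp hmem
  obtain ⟨hQlen, hQa, hQb⟩ := hQconn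
  have hcard : e.card = 3 := h3 e he
  -- helper: four distinct elements cannot lie in e
  have four : ∀ c d : V, c ∈ e → d ∈ e → c ≠ d → c ≠ x → c ≠ y → d ≠ x → d ≠ y → False := by
    intro c d hc hd hcd hcx hcy hdx' hdy'
    have hsub4 : ({x, y, c, d} : Finset V) ⊆ e := by
      intro w hw; simp at hw; rcases hw with h|h|h|h <;> subst h <;> assumption
    have hcard4 : ({x, y, c, d} : Finset V).card = 4 := by
      rw [Finset.card_insert_of_notMem (by simp [hxy, Ne.symm hcx, Ne.symm hdx']),
        Finset.card_insert_of_notMem (by simp [Ne.symm hcy, Ne.symm hdy']),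
        Finset.card_insert_of_notMem (by simp [hcd]), Finset.card_singleton]
    have := Finset.card_le_card hsub4
    omega
  -- degree-two facts for interior vertices of Q
  have hdeg2of : ∀ t, t ≤ Q.len → 0 < t → t < Q.len → 2 ≤ degH H (Q.v t) := by
    intro t _ h0 hlt
    have h1 : Q.edgeAt (t-1) ∈ H := hQpath.1 (t-1) (by omega)
    have h2 : Q.edgeAt t ∈ H := hQpath.1 t (by omega)
    have hne : Q.edgeAt (t-1) ≠ Q.edgeAt t := edgeAt_injOn hQpath (by omega) (by omega) (by omega)
    have hm1 : Q.v t ∈ Q.edgeAt (t-1) := by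
      have : t - 1 + 1 = t := by omega
      rw [← this]; exact mem_edgeAt_right Q (t-1)
    exact degH_two_le h1 h2 hne hm1 (mem_edgeAt_left Q t)
  have hvne : ∀ t, t ≤ Q.len → 0 < t → t < Q.len → Q.v t ≠ x ∧ Q.v t ≠ y := by
    intro t ht h0 hlt
    have := hdeg2of t ht h0 hlt
    constructor
    · intro h; rw [h] at this; omega
    · intro h; rw [h] at this; omega
  -- the members of edgeAt i
  have hvi : Q.v i ∈ e := by rw [hie]; exact mem_edgeAt_left Q i
  have hvi1 : Q.v (i+1) ∈ e := by rw [hie]; exact mem_edgeAt_right Q i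
  have hui : Q.u (i+1) ∈ e := by rw [hie]; exact mem_edgeAt_mid Q i
  have hvv : Q.v i ≠ Q.v (i+1) := by
    intro h
    have := hQpath.2.1 (Set.mem_Iic.mpr (by omega : i ≤ Q.len))
      (Set.mem_Iic.mpr (by omega : i + 1 ≤ Q.len)) h
    omega
  -- case analysis on the position of i
  rcases Nat.eq_zero_or_pos i with hi0 | hipos
  · subst hi0
    -- a is v 0 or u 1, lies in e, differs from x,y
    have hae : a ∈ e := by
      rcases hQa with h | h
      · rw [h]; exact hvi
      · rw [h]; exact hui
    rcases Nat.eq_or_lt_of_le hQlen with hlen1 | hlen2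
    · -- whole path is the single edge e : b also in e
      have hbe : b ∈ e := by
        rcases hQb with h | h
        · rw [h, ← hlen1]; exact hvi1
        · rw [h, ← hlen1]; exact hui
      exact four a b hae hbe hab hax hay hbx hby
    · -- v 1 is interior, degree ≥ 2
      have h1 := hvne 1 (by omega) (by omega) (by omega)
      have hane : a ≠ Q.v 1 := by
        rcases hQa with h | h
        · rw [h]
          intro hh
          have := hQpath.2.1 (Set.mem_Iic.mpr (by omega : 0 ≤ Q.len))
            (Set.mem_Iic.mpr (by omega : 1 ≤ Q.len)) hh
          omega
        · rw [h]
          intro hh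
          exact hQpath.2.2.2 1 (by omega) 1 le_rfl (by omega) hh.symm
      exact four a (Q.v 1) hae hvi1 hane hax hay h1.1 h1.2
  · rcases Nat.lt_or_ge i (Q.len - 1) with hilt | hige
    · -- interior edge: v i and v (i+1) both have degree ≥ 2
      have h1 := hvne i (by omega) (by omega) (by omega)
      have h2 := hvne (i+1) (by omega) (by omega) (by omega)
      exact four (Q.v i) (Q.v (i+1)) hvi hvi1 hvv h1.1 h1.2 h2.1 h2.2
    · -- last edge: i = Q.len - 1 ≥ 1
      have hieq : i = Q.len - 1 := by omega
      have h1 := hvne i (by omega) (by omega) (by omega)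
      have hbe : b ∈ e := by
        rcases hQb with h | h
        · rw [h]
          have : Q.len = i + 1 := by omega
          rw [this]; exact hvi1
        · rw [h]
          have : Q.len = i + 1 := by omega
          rw [this]; exact hui
      have hbne : Q.v i ≠ b := by
        rcases hQb with h | h
        · rw [h]
          intro hh
          have := hQpath.2.1 (Set.mem_Iic.mpr (by omega : i ≤ Q.len))
            (Set.mem_Iic.mpr (le_refl Q.len)) hh
          omega
        · rw [h]
          exact hQpath.2.2.2 i (by omega) Q.len (by omega) le_rfl
      exact four (Q.v i) b hvi hbe hbne h1.1 h1.2 hbx hby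
  
/-- Removing a leaf edge keeps the subtree property. -/
lemma isSubtree_erase {H : Finset (Finset V)} (hsub : IsSubtree H) {e : Finset V}
    (he : e ∈ H) {x y : V} (hx : x ∈ e) (hy : y ∈ e) (hxy : x ≠ y)
    (hdx : degH H x = 1) (hdy : degH H y = 1) :
    IsSubtree (H.erase e) := by
  obtain ⟨h3, hlin, hconn⟩ := hsub
  have herase_sub : H.erase e ⊆ H := Finset.erase_subset e H
  have hxout : ∀ w, degH H w = 1 → w ∈ e → w ∉ hVerts (H.erase e) := by
    intro w hdw hwe hmem
    obtain ⟨f, hf, hwf⟩ := Finset.mem_biUnion.mp hmem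
    have := eq_of_deg_one hdw (herase_sub hf) he hwf hwe
    exact Finset.ne_of_mem_erase hf this
  refine ⟨fun f hf => h3 f (herase_sub hf), fun f hf g hg => hlin f (herase_sub hf) g (herase_sub hg), ?_⟩
  intro a b ha hb hab
  have hax : a ≠ x := fun h => hxout x hdx hx (h ▸ ha)
  have hay : a ≠ y := fun h => hxout y hdy hy (h ▸ ha)
  have hbx : b ≠ x := fun h => hxout x hdx hx (h ▸ hb)
  have hby : b ≠ y := fun h => hxout y hdy hy (h ▸ hb)
  have haH : a ∈ hVerts H := by
    obtain ⟨f, hf, hwf⟩ := Finset.mem_biUnion.mp ha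
    exact mem_hVerts (herase_sub hf) hwf
  have hbH : b ∈ hVerts H := by
    obtain ⟨f, hf, hwf⟩ := Finset.mem_biUnion.mp hb
    exact mem_hVerts (herase_sub hf) hwf
  constructor
  · obtain ⟨Q, hQpath, hQconn⟩ := (hconn a b haH hbH hab).1
    have hnot := leaf_edge_not_on_path ⟨h3, hlin, hconn⟩ he hx hy hxy hdx hdy
      hax hay hbx hby hab hQpath hQconn
    refine ⟨Q, ⟨?_, hQpath.2.1, hQpath.2.2.1, hQpath.2.2.2⟩, hQconn⟩
    intro i hi
    refine Finset.mem_erase.mpr ⟨?_, hQpath.1 i hi⟩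
    intro hh
    exact hnot (hh ▸ mem_edgeSet_iff.mpr ⟨i, hi, rfl⟩)
  · intro P Q hP hPc hQ hQc
    exact (hconn a b haH hbH hab).2 P Q (isPathIn_mono herase_sub hP) hPc
      (isPathIn_mono herase_sub hQ) hQc

/-- A nonempty subtree on `k` edges covers exactly `2k+1` vertices. -/
lemma hVerts_card_aux : ∀ (n : ℕ) (H : Finset (Finset V)), H.card = n → IsSubtree H →
    H.Nonempty → (hVerts H).card = 2 * n + 1 := by
  intro n
  induction n using Nat.strong_induction_on with
  | _ n ih =>
    intro H hcard hsub hne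
    rcases Nat.lt_or_ge n 2 with hn2 | hn2
    · -- n = 1
      have hn1 : n = 1 := by
        have := Finset.card_pos.mpr hne
        omega
      obtain ⟨e, hHe⟩ := Finset.card_eq_one.mp (by omega : H.card = 1)
      have heH : e ∈ H := by rw [hHe]; exact Finset.mem_singleton_self e
      rw [hHe, hn1]
      have : hVerts ({e} : Finset (Finset V)) = e := Finset.singleton_biUnion
      rw [this, hsub.1 e heH]
    · -- n ≥ 2 : peel a leaf edge
      obtain ⟨e, he, x, hx, y, hy, hxy, hdx, hdy⟩ := exists_leaf_edge hsub hne
      set H' := H.erase e with hH'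
      have hsub' : IsSubtree H' := isSubtree_erase hsub he hx hy hxy hdx hdy
      have hcard' : H'.card = n - 1 := by
        rw [hH', Finset.card_erase_of_mem he, hcard]
      have hne' : H'.Nonempty := Finset.card_pos.mp (by omega)
      have hIH := ih (n-1) (by omega) H' hcard' hsub' hne'
      -- the third vertex of e
      obtain ⟨z, hz, hdz⟩ := exists_deg_two_vertex hsub he (by omega)
      have hzx : z ≠ x := by intro h; rw [h, hdx] at hdz; omega
      have hzy : z ≠ y := by intro h; rw [h, hdy] at hdz; omega
      obtain ⟨f, hfH, hzf, hfe⟩ := exists_other_edge hdz he hz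
      have hzH' : z ∈ hVerts H' := mem_hVerts (Finset.mem_erase.mpr ⟨hfe, hfH⟩) hzf
      have heq : e = {x, y, z} := eq_triple_of_subset (hsub.1 e he) hx hy hz hxy
        (Ne.symm hzx) (Ne.symm hzy)
      have hxout : x ∉ hVerts H' := by
        intro hmem
        obtain ⟨f', hf', hwf'⟩ := Finset.mem_biUnion.mp hmem
        have := eq_of_deg_one hdx (Finset.mem_of_mem_erase hf') he hwf' hx
        exact Finset.ne_of_mem_erase hf' this
      have hyout : y ∉ hVerts H' := by
        intro hmem
        obtain ⟨f', hf', hwf'⟩ := Finset.mem_biUnion.mp hmem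
        have := eq_of_deg_one hdy (Finset.mem_of_mem_erase hf') he hwf' hy
        exact Finset.ne_of_mem_erase hf' this
      have hverts : hVerts H = insert x (insert y (hVerts H')) := by
        apply Finset.Subset.antisymm
        · intro w hw
          obtain ⟨g, hg, hwg⟩ := Finset.mem_biUnion.mp hw
          by_cases hge : g = e
          · subst hge
            rw [heq] at hwg
            simp at hwg
            rcases hwg with h | h | h
            · simp [h]
            · simp [h]
            · subst h; simp [Finset.mem_insert, hzH']
          · have : w ∈ hVerts H' := mem_hVerts (Finset.mem_erase.mpr ⟨hge, hg⟩) hwg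
            simp [Finset.mem_insert, this]
        · intro w hw
          simp at hw
          rcases hw with h | h | h
          · subst h; exact mem_hVerts he hx
          · subst h; exact mem_hVerts he hy
          · obtain ⟨g, hg, hwg⟩ := Finset.mem_biUnion.mp h
            exact mem_hVerts (Finset.mem_of_mem_erase hg) hwg
      rw [hverts, Finset.card_insert_of_notMem (by simp [hxy, hxout]),
        Finset.card_insert_of_notMem hyout, hIH]
      omega

lemma hVerts_card {H : Finset (Finset V)} (hsub : IsSubtree H) (hne : H.Nonempty) :
    (hVerts H).card = 2 * H.card + 1 :=
  hVerts_card_aux H.card H rfl hsub hne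

end Stmt10Aux

namespace Stmt10Aux

variable {V : Type} [DecidableEq V]

open Finset

/-- Double counting vertex-edge incidences restricted to a vertex predicate. -/
lemma double_count (T : Finset (Finset V)) (p : V → Prop) [DecidablePred p] :
    ∑ x ∈ (hVerts T).filter p, degH T x = ∑ e ∈ T, (e.filter p).card := by
  have h1 : ∀ x, degH T x = ∑ e ∈ T, if x ∈ e then 1 else 0 := by
    intro x; rw [degH, Finset.card_filter]
  calc ∑ x ∈ (hVerts T).filter p, degH T x
      = ∑ x ∈ (hVerts T).filter p, ∑ e ∈ T, if x ∈ e then 1 else 0 := by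
        apply Finset.sum_congr rfl; intro x _; exact h1 x
    _ = ∑ e ∈ T, ∑ x ∈ (hVerts T).filter p, if x ∈ e then 1 else 0 := Finset.sum_comm
    _ = ∑ e ∈ T, (e.filter p).card := by
        apply Finset.sum_congr rfl
        intro e he
        rw [← Finset.card_filter]
        congr 1
        ext x
        simp only [Finset.mem_filter]
        constructor
        · rintro ⟨⟨-, hp⟩, hxe⟩; exact ⟨hxe, hp⟩
        · rintro ⟨hxe, hp⟩; exact ⟨⟨mem_hVerts he hxe, hp⟩, hxe⟩

lemma handshake (T : Finset (Finset V)) (h3 : ThreeUniform T) :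
    ∑ x ∈ hVerts T, degH T x = 3 * T.card := by
  have := double_count T (fun _ => True)
  rw [Finset.filter_true] at this
  rw [this]
  rw [Finset.sum_congr rfl (fun e he => by rw [Finset.filter_true, h3 e he])]
  rw [Finset.sum_const, smul_eq_mul, mul_comm]

lemma deg_pos_of_mem_hVerts {T : Finset (Finset V)} {x : V} (hx : x ∈ hVerts T) :
    1 ≤ degH T x := by
  obtain ⟨e, he, hxe⟩ := Finset.mem_biUnion.mp hx
  exact degH_pos he hxe

end Stmt10Aux

namespace Stmt10Aux

variable {V : Type} [DecidableEq V]

open Finset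

/-- Number of degree-1 vertices of an edge. -/
def d1 (T : Finset (Finset V)) (e : Finset V) : ℕ := (e.filter fun x => degH T x = 1).card

/-- Chain edges: all vertices of degree ≤ 2, exactly one of degree 1. -/
def CEdges (T : Finset (Finset V)) : Finset (Finset V) :=
  T.filter fun e => (∀ x ∈ e, degH T x ≤ 2) ∧ d1 T e = 1

/-- Leaf edges. -/
def leafEdges (T : Finset (Finset V)) : Finset (Finset V) :=
  T.filter fun e => 2 ≤ d1 T e

lemma leafEdges_eq (T : Finset (Finset V))
    [DecidablePred (fun e : Finset V => ∃ x ∈ e, IsLeaf T x)] :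
    T.filter (fun e => ∃ x ∈ e, IsLeaf T x) = leafEdges T := by
  apply Finset.filter_congr
  intro e he
  constructor
  · rintro ⟨x, hxe, hdx, e', he', hxe', y, hye', hyx, hdy⟩
    have hee' : e = e' := eq_of_deg_one hdx he he' hxe hxe'
    subst hee'
    have : ({y, x} : Finset V) ⊆ e.filter fun z => degH T z = 1 := by
      intro w hw
      rcases Finset.mem_insert.mp hw with h | h
      · subst h; exact Finset.mem_filter.mpr ⟨hye', hdy⟩
      · rw [Finset.mem_singleton] at h; subst h; exact Finset.mem_filter.mpr ⟨hxe, hdx⟩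
    calc 2 = ({y, x} : Finset V).card := (Finset.card_pair hyx).symm
      _ ≤ _ := Finset.card_le_card this
  · intro h2
    simp only [d1] at h2
    obtain ⟨x, hx⟩ := Finset.card_pos.mp (by omega : 0 < (e.filter fun z => degH T z = 1).card)
    have : 0 < ((e.filter fun z => degH T z = 1).erase x).card := by
      rw [Finset.card_erase_of_mem hx]; omega
    obtain ⟨y, hy⟩ := Finset.card_pos.mp this
    have hyx : y ≠ x := Finset.ne_of_mem_erase hy
    have hy' := Finset.mem_of_mem_erase hy
    have hxf := Finset.mem_filter.mp hx
    have hyf := Finset.mem_filter.mp hy'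
    exact ⟨x, hxf.1, hxf.2, e, he, hxf.1, y, hyf.1, hyx, hyf.2⟩

/-- Partition of an edge's vertices by degree. -/
lemma edge_deg_partition {T : Finset (Finset V)} (h3 : ThreeUniform T) {e : Finset V}
    (he : e ∈ T) :
    d1 T e + (e.filter fun x => degH T x = 2).card
      + (e.filter fun x => 3 ≤ degH T x).card = 3 := by
  have hpos : ∀ x ∈ e, 1 ≤ degH T x := fun x hx => degH_pos he hx
  have h1 : d1 T e + (e.filter fun x => ¬ degH T x = 1).card = e.card :=
    Finset.card_filter_add_card_filter_not _
  have h2 : ((e.filter fun x => ¬ degH T x = 1).filter fun x => degH T x = 2).card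
      + ((e.filter fun x => ¬ degH T x = 1).filter fun x => ¬ degH T x = 2).card
      = (e.filter fun x => ¬ degH T x = 1).card :=
    Finset.card_filter_add_card_filter_not _
  have e2 : (e.filter fun x => ¬ degH T x = 1).filter (fun x => degH T x = 2)
      = e.filter fun x => degH T x = 2 := by
    rw [Finset.filter_filter]
    apply Finset.filter_congr
    intro x hx
    constructor
    · exact fun h => h.2
    · intro h; exact ⟨by omega, h⟩
  have e3 : (e.filter fun x => ¬ degH T x = 1).filter (fun x => ¬ degH T x = 2)
      = e.filter fun x => 3 ≤ degH T x := by
    rw [Finset.filter_filter]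
    apply Finset.filter_congr
    intro x hx
    have := hpos x hx
    constructor
    · intro h; omega
    · intro h; omega
  rw [e2, e3] at h2
  rw [h3 e he] at h1
  omega

/-- d1 is at most 2 when there are at least two edges. -/
lemma d1_le_two {T : Finset (Finset V)} (hsub : IsSubtree T) (hk2 : 2 ≤ T.card)
    {e : Finset V} (he : e ∈ T) : d1 T e ≤ 2 := by
  obtain ⟨w, hw, hdw⟩ := exists_deg_two_vertex hsub he hk2
  have hsubw : e.filter (fun x => degH T x = 1) ⊆ e.erase w := by
    intro x hx
    obtain ⟨hxe, hdx⟩ := Finset.mem_filter.mp hx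
    refine Finset.mem_erase.mpr ⟨?_, hxe⟩
    intro h; rw [h] at hdx; omega
  calc d1 T e ≤ (e.erase w).card := Finset.card_le_card hsubw
    _ = e.card - 1 := Finset.card_erase_of_mem hw
    _ ≤ 2 := by rw [hsub.1 e he]

/-- The main counting bounds. -/
lemma main_counts (T : Finset (Finset V)) (hsub : IsSubtree T) (hk2 : 2 ≤ T.card) :
    (T \ CEdges T).card ≤ 4 * (leafEdges T).card ∧
    (∑ f ∈ T \ CEdges T, (f.filter fun x => degH T x = 2).card) ≤ 4 * (leafEdges T).card := by
  have h3 := hsub.1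
  set k := T.card with hk
  -- vertex-side counts
  set n1 := ((hVerts T).filter fun x => degH T x = 1).card with hn1
  set n2 := ((hVerts T).filter fun x => degH T x = 2).card with hn2
  set n3 := ((hVerts T).filter fun x => 3 ≤ degH T x).card with hn3
  set S3 := ∑ x ∈ (hVerts T).filter (fun x => 3 ≤ degH T x), degH T x with hS3
  have hvpos : ∀ x ∈ hVerts T, 1 ≤ degH T x := fun x hx => deg_pos_of_mem_hVerts hx
  -- handshake partitioned
  have hsum : ∑ x ∈ hVerts T, degH T x = 3 * k := handshake T h3
  have hsplit1 : ∑ x ∈ (hVerts T).filter (fun x => degH T x = 1), degH T x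
      + ∑ x ∈ (hVerts T).filter (fun x => ¬ degH T x = 1), degH T x = 3 * k := by
    rw [Finset.sum_filter_add_sum_filter_not]; exact hsum
  have hsplit2 : ∑ x ∈ ((hVerts T).filter (fun x => ¬ degH T x = 1)).filter (fun x => degH T x = 2), degH T x
      + ∑ x ∈ ((hVerts T).filter (fun x => ¬ degH T x = 1)).filter (fun x => ¬ degH T x = 2), degH T x
      = ∑ x ∈ (hVerts T).filter (fun x => ¬ degH T x = 1), degH T x := by
    rw [Finset.sum_filter_add_sum_filter_not]
  have efil2 : ((hVerts T).filter (fun x => ¬ degH T x = 1)).filter (fun x => degH T x = 2)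
      = (hVerts T).filter (fun x => degH T x = 2) := by
    rw [Finset.filter_filter]
    apply Finset.filter_congr
    intro x hx
    constructor
    · exact fun h => h.2
    · intro h; exact ⟨by omega, h⟩
  have efil3 : ((hVerts T).filter (fun x => ¬ degH T x = 1)).filter (fun x => ¬ degH T x = 2)
      = (hVerts T).filter (fun x => 3 ≤ degH T x) := by
    rw [Finset.filter_filter]
    apply Finset.filter_congr
    intro x hx
    have := hvpos x hx
    constructor
    · intro h; omega
    · intro h; omega
  rw [efil2, efil3] at hsplit2
  have hs1 : ∑ x ∈ (hVerts T).filter (fun x => degH T x = 1), degH T x = n1 := by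
    rw [hn1, Finset.card_eq_sum_ones]
    apply Finset.sum_congr rfl
    intro x hx
    exact (Finset.mem_filter.mp hx).2
  have hs2 : ∑ x ∈ (hVerts T).filter (fun x => degH T x = 2), degH T x = 2 * n2 := by
    rw [hn2, Finset.card_eq_sum_ones, Finset.mul_sum]
    apply Finset.sum_congr rfl
    intro x hx
    rw [(Finset.mem_filter.mp hx).2]
    omega
  -- handshake: n1 + 2 n2 + S3 = 3k
  have hHand : n1 + 2 * n2 + S3 = 3 * k := by
    rw [← hs1, ← hs2] at *
    omega
  -- vertex count: n1 + n2 + n3 = 2k + 1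
  have hV : (hVerts T).card = 2 * k + 1 :=
    hVerts_card hsub (Finset.card_pos.mp (by omega))
  have hcsplit1 : n1 + ((hVerts T).filter (fun x => ¬ degH T x = 1)).card = 2 * k + 1 := by
    rw [hn1, Finset.card_filter_add_card_filter_not, hV]
  have hcsplit2 : n2 + n3 = ((hVerts T).filter (fun x => ¬ degH T x = 1)).card := by
    rw [hn2, hn3, ← efil2, ← efil3, Finset.card_filter_add_card_filter_not]
  -- 3 n3 ≤ S3
  have h3n3 : 3 * n3 ≤ S3 := by
    rw [hn3, hS3, Finset.card_eq_sum_ones, Finset.mul_sum]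
    apply Finset.sum_le_sum
    intro x hx
    have := (Finset.mem_filter.mp hx).2
    omega
  -- n1 = ∑ d1
  have hn1sum : n1 = ∑ e ∈ T, d1 T e := by
    have hfix : ∑ x ∈ (hVerts T).filter (fun x => degH T x = 1), degH T x
        = ∑ e ∈ T, d1 T e := by
      simp only [d1]
      exact double_count T (fun x => degH T x = 1)
    rw [hn1, Finset.card_eq_sum_ones, ← hfix]
    apply Finset.sum_congr rfl
    intro x hx
    exact ((Finset.mem_filter.mp hx).2).symm
  -- classification of edges
  set Aset := leafEdges T with hA
  set Zset := T.filter (fun e => d1 T e = 0) with hZ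
  set Bset := T.filter (fun e => ∃ x ∈ e, 3 ≤ degH T x) with hB
  -- per-edge: d1 e + [d1 e = 0] ≤ 1 + [2 ≤ d1 e]
  have hperedge : ∀ e ∈ T, d1 T e + (if d1 T e = 0 then 1 else 0)
      ≤ 1 + (if 2 ≤ d1 T e then 1 else 0) := by
    intro e he
    have := d1_le_two hsub hk2 he
    split_ifs <;> omega
  have hsumineq : n1 + Zset.card ≤ k + Aset.card := by
    have h1 : Zset.card = ∑ e ∈ T, if d1 T e = 0 then 1 else 0 := by
      rw [hZ, Finset.card_filter]
    have h2 : Aset.card = ∑ e ∈ T, if 2 ≤ d1 T e then 1 else 0 := by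
      rw [hA, leafEdges, Finset.card_filter]
    have h3' : k = ∑ e ∈ T, 1 := by rw [hk, Finset.card_eq_sum_ones]
    rw [hn1sum, h1, h2, h3', ← Finset.sum_add_distrib, ← Finset.sum_add_distrib]
    exact Finset.sum_le_sum hperedge
  -- |B| ≤ S3
  have hBS3 : Bset.card ≤ S3 := by
    have hle : Bset.card ≤ ∑ e ∈ T, (e.filter fun x => 3 ≤ degH T x).card := by
      rw [hB, Finset.card_eq_sum_ones]
      calc ∑ _e ∈ T.filter (fun e => ∃ x ∈ e, 3 ≤ degH T x), 1
          ≤ ∑ e ∈ T.filter (fun e => ∃ x ∈ e, 3 ≤ degH T x),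
              (e.filter fun x => 3 ≤ degH T x).card := by
            apply Finset.sum_le_sum
            intro e he
            obtain ⟨x, hxe, hx3⟩ := (Finset.mem_filter.mp he).2
            exact Finset.card_pos.mpr ⟨x, Finset.mem_filter.mpr ⟨hxe, hx3⟩⟩
        _ ≤ ∑ e ∈ T, (e.filter fun x => 3 ≤ degH T x).card :=
            Finset.sum_le_sum_of_subset (Finset.filter_subset _ _)
    rw [hS3, double_count T (fun x => 3 ≤ degH T x)]
    exact hle
  -- key: 3|A| ≥ 6 + 3|Z| + S3
  have hkey : 6 + 3 * Zset.card + S3 ≤ 3 * Aset.card := by omega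
  -- T \ CE ⊆ A ∪ Z ∪ B
  have hNsub : T \ CEdges T ⊆ Aset ∪ Zset ∪ Bset := by
    intro e he
    obtain ⟨heT, heC⟩ := Finset.mem_sdiff.mp he
    rw [CEdges, Finset.mem_filter] at heC
    push_neg at heC
    by_cases hb : ∃ x ∈ e, 3 ≤ degH T x
    · exact Finset.mem_union_right _ (Finset.mem_filter.mpr ⟨heT, hb⟩)
    · push_neg at hb
      have hall : ∀ x ∈ e, degH T x ≤ 2 := fun x hx => by
        have := hb x hx; omega
      have hd1 : d1 T e ≠ 1 := heC heT hall
      apply Finset.mem_union_left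
      rcases Nat.eq_zero_or_pos (d1 T e) with h | h
      · exact Finset.mem_union_right _ (Finset.mem_filter.mpr ⟨heT, h⟩)
      · exact Finset.mem_union_left _ (Finset.mem_filter.mpr ⟨heT, by omega⟩)
  have hNbound : (T \ CEdges T).card ≤ Aset.card + Zset.card + Bset.card := by
    calc (T \ CEdges T).card ≤ (Aset ∪ Zset ∪ Bset).card := Finset.card_le_card hNsub
      _ ≤ (Aset ∪ Zset).card + Bset.card := Finset.card_union_le _ _
      _ ≤ Aset.card + Zset.card + Bset.card := by
          have := Finset.card_union_le Aset Zset; omega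
  constructor
  · omega
  · -- sum of degree-2 counts over non-chain edges
    have hper2 : ∀ f ∈ T \ CEdges T, (f.filter fun x => degH T x = 2).card
        ≤ 1 + 2 * (if d1 T f = 0 then 1 else 0) := by
      intro f hf
      obtain ⟨hfT, hfC⟩ := Finset.mem_sdiff.mp hf
      have hpart := edge_deg_partition h3 hfT
      rcases Nat.eq_zero_or_pos (d1 T f) with h0 | h0
      · rw [if_pos h0]; omega
      · rw [if_neg (by omega)]
        rcases Nat.lt_or_ge (d1 T f) 2 with h1 | h1
        · -- d1 f = 1 and f not chain: some vertex of degree ≥ 3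
          have hd1f : d1 T f = 1 := by omega
          rw [CEdges, Finset.mem_filter] at hfC
          push_neg at hfC
          have := hfC hfT
          by_cases hball : ∀ x ∈ f, degH T x ≤ 2
          · exact absurd hd1f (this hball)
          · push_neg at hball
            obtain ⟨x, hxf, hx3⟩ := hball
            have : 0 < (f.filter fun x => 3 ≤ degH T x).card :=
              Finset.card_pos.mpr ⟨x, Finset.mem_filter.mpr ⟨hxf, by omega⟩⟩
            omega
        · omega
    have : (∑ f ∈ T \ CEdges T, (f.filter fun x => degH T x = 2).card)
        ≤ ∑ f ∈ T \ CEdges T, (1 + 2 * (if d1 T f = 0 then 1 else 0)) :=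
      Finset.sum_le_sum hper2
    have hzsum : ∑ f ∈ T \ CEdges T, (if d1 T f = 0 then 1 else 0) ≤ Zset.card := by
      have h1 : ∑ f ∈ T \ CEdges T, (if d1 T f = 0 then 1 else 0)
          = ((T \ CEdges T).filter (fun f => d1 T f = 0)).card := by
        rw [Finset.card_filter]
      rw [h1, hZ]
      apply Finset.card_le_card
      intro f hf
      obtain ⟨hf1, hf2⟩ := Finset.mem_filter.mp hf
      exact Finset.mem_filter.mpr ⟨(Finset.mem_sdiff.mp hf1).1, hf2⟩
    rw [Finset.sum_add_distrib, ← Finset.mul_sum] at this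
    have hcard1 : ∑ _f ∈ T \ CEdges T, 1 = (T \ CEdges T).card := by
      rw [Finset.card_eq_sum_ones]
    omega

end Stmt10Aux

namespace Stmt10Aux

variable {V : Type} [DecidableEq V] [Nonempty V]

open Finset

/-- The pendant (degree-1) vertex of a chain edge. -/
noncomputable def pend (T : Finset (Finset V)) (e : Finset V) : V :=
  if h : (e.filter fun x => degH T x = 1).Nonempty then h.choose else Classical.arbitrary V

/-- The link vertex of a chain edge other than `x`. -/
noncomputable def exitl (T : Finset (Finset V)) (e : Finset V) (x : V) : V :=
  if h : ((e.filter fun z => degH T z = 2).erase x).Nonempty then h.choose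
  else Classical.arbitrary V

/-- The edge other than `e` containing `y`. -/
noncomputable def nextE (T : Finset (Finset V)) (e : Finset V) (y : V) : Finset V :=
  if h : ((T.filter fun f => y ∈ f).erase e).Nonempty then h.choose else ∅

/-- One step along a chain: state is (current edge, entry link). -/
noncomputable def stepS (T : Finset (Finset V)) (s : Finset V × V) : Finset V × V :=
  (nextE T s.1 (exitl T s.1 s.2), exitl T s.1 s.2)

/-- A good state. -/
def GoodS (T : Finset (Finset V)) (s : Finset V × V) : Prop :=
  s.1 ∈ CEdges T ∧ s.2 ∈ s.1 ∧ degH T s.2 = 2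

lemma CE_subset (T : Finset (Finset V)) : CEdges T ⊆ T := Finset.filter_subset _ _

lemma CE_spec {T : Finset (Finset V)} {e : Finset V} (he : e ∈ CEdges T) :
    e ∈ T ∧ (∀ x ∈ e, degH T x ≤ 2) ∧ d1 T e = 1 := by
  obtain ⟨h1, h2, h3⟩ := Finset.mem_filter.mp he
  exact ⟨h1, h2, h3⟩

lemma CE_links_card {T : Finset (Finset V)} (h3 : ThreeUniform T) {e : Finset V}
    (he : e ∈ CEdges T) : (e.filter fun z => degH T z = 2).card = 2 := by
  obtain ⟨heT, hle, hd1⟩ := CE_spec he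
  have hpart := edge_deg_partition h3 heT
  have h0 : (e.filter fun x => 3 ≤ degH T x).card = 0 := by
    rw [Finset.card_eq_zero, Finset.filter_eq_empty_iff]
    intro x hx
    have := hle x hx
    omega
  rw [d1] at hd1 hpart
  omega

lemma pend_spec {T : Finset (Finset V)} {e : Finset V} (he : e ∈ CEdges T) :
    pend T e ∈ e ∧ degH T (pend T e) = 1 ∧
      ∀ w ∈ e, degH T w = 1 → w = pend T e := by
  obtain ⟨heT, hle, hd1⟩ := CE_spec he
  rw [d1] at hd1
  have hne : (e.filter fun x => degH T x = 1).Nonempty := Finset.card_pos.mp (by omega)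
  rw [pend, dif_pos hne]
  have hmem := hne.choose_spec
  obtain ⟨h1, h2⟩ := Finset.mem_filter.mp hmem
  refine ⟨h1, h2, ?_⟩
  intro w hw hdw
  have hw' : w ∈ e.filter fun x => degH T x = 1 := Finset.mem_filter.mpr ⟨hw, hdw⟩
  exact Finset.card_le_one.mp (le_of_eq hd1) w hw' _ hmem

lemma exit_spec {T : Finset (Finset V)} (h3 : ThreeUniform T) {e : Finset V} {x : V}
    (he : e ∈ CEdges T) (hx : x ∈ e) (hdx : degH T x = 2) :
    exitl T e x ∈ e ∧ degH T (exitl T e x) = 2 ∧ exitl T e x ≠ x ∧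
      ∀ w ∈ e, degH T w = 2 → w ≠ x → w = exitl T e x := by
  have hlinks := CE_links_card h3 he
  have hxl : x ∈ e.filter fun z => degH T z = 2 := Finset.mem_filter.mpr ⟨hx, hdx⟩
  have hcard : ((e.filter fun z => degH T z = 2).erase x).card = 1 := by
    rw [Finset.card_erase_of_mem hxl, hlinks]
  have hne : ((e.filter fun z => degH T z = 2).erase x).Nonempty :=
    Finset.card_pos.mp (by omega)
  rw [exitl, dif_pos hne]
  have hmem := hne.choose_spec
  have h1 := Finset.ne_of_mem_erase hmem
  have h2 := Finset.mem_of_mem_erase hmem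
  obtain ⟨h2a, h2b⟩ := Finset.mem_filter.mp h2
  refine ⟨h2a, h2b, h1, ?_⟩
  intro w hw hdw hwx
  have hw' : w ∈ (e.filter fun z => degH T z = 2).erase x :=
    Finset.mem_erase.mpr ⟨hwx, Finset.mem_filter.mpr ⟨hw, hdw⟩⟩
  exact Finset.card_le_one.mp (le_of_eq hcard) w hw' _ hmem

lemma nextE_spec {T : Finset (Finset V)} {e : Finset V} {y : V} (he : e ∈ T)
    (hy : y ∈ e) (hdy : degH T y = 2) :
    nextE T e y ∈ T ∧ y ∈ nextE T e y ∧ nextE T e y ≠ e ∧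
      ∀ f ∈ T, y ∈ f → f ≠ e → f = nextE T e y := by
  have hef : e ∈ T.filter fun f => y ∈ f := Finset.mem_filter.mpr ⟨he, hy⟩
  have hcard : ((T.filter fun f => y ∈ f).erase e).card = 1 := by
    rw [Finset.card_erase_of_mem hef]
    have : (T.filter fun f => y ∈ f).card = 2 := hdy
    omega
  have hne : ((T.filter fun f => y ∈ f).erase e).Nonempty := Finset.card_pos.mp (by omega)
  rw [nextE, dif_pos hne]
  have hmem := hne.choose_spec
  have h1 := Finset.ne_of_mem_erase hmem
  have h2 := Finset.mem_of_mem_erase hmem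
  obtain ⟨h2a, h2b⟩ := Finset.mem_filter.mp h2
  refine ⟨h2a, h2b, h1, ?_⟩
  intro f hf hyf hfe
  have hf' : f ∈ (T.filter fun g => y ∈ g).erase e :=
    Finset.mem_erase.mpr ⟨hfe, Finset.mem_filter.mpr ⟨hf, hyf⟩⟩
  exact Finset.card_le_one.mp (le_of_eq hcard) f hf' _ hmem

/-- A chain sequence of states. -/
def ChainSeq (T : Finset (Finset V)) (σ : ℕ → Finset V × V) (r : ℕ) : Prop :=
  (∀ i ≤ r, GoodS T (σ i)) ∧ ∀ i < r, σ (i + 1) = stepS T (σ i)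

lemma chainSeq_shift {T : Finset (Finset V)} {σ : ℕ → Finset V × V} {r : ℕ}
    (hc : ChainSeq T σ r) (a b : ℕ) (har : a ≤ r) (hbr : b ≤ r) :
    ChainSeq T (fun i => σ (a + i)) (b - a) := by
  refine ⟨fun i hi => hc.1 (a + i) (by omega), fun i hi => ?_⟩
  have h : a + (i + 1) = a + i + 1 := by omega
  show σ (a + (i + 1)) = stepS T (σ (a + i))
  rw [h]
  exact hc.2 (a + i) (by omega)

section ChainFacts

variable {T : Finset (Finset V)} {σ : ℕ → Finset V × V} {r : ℕ}

lemma step_snd (hc : ChainSeq T σ r) {i : ℕ} (hi : i < r) :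
    (σ (i+1)).2 = exitl T (σ i).1 (σ i).2 := by rw [hc.2 i hi]; rfl

lemma step_fst (hc : ChainSeq T σ r) {i : ℕ} (hi : i < r) :
    (σ (i+1)).1 = nextE T (σ i).1 (exitl T (σ i).1 (σ i).2) := by rw [hc.2 i hi]; rfl

lemma good_at (hc : ChainSeq T σ r) {i : ℕ} (hi : i ≤ r) : GoodS T (σ i) := hc.1 i hi

variable (h3 : ThreeUniform T)

include h3

lemma exit_at (hc : ChainSeq T σ r) {i : ℕ} (hi : i ≤ r) :
    exitl T (σ i).1 (σ i).2 ∈ (σ i).1 ∧ degH T (exitl T (σ i).1 (σ i).2) = 2 ∧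
      exitl T (σ i).1 (σ i).2 ≠ (σ i).2 := by
  obtain ⟨hE, hx, hd⟩ := hc.1 i hi
  obtain ⟨a, b, c, -⟩ := exit_spec h3 hE hx hd
  exact ⟨a, b, c⟩

lemma x_succ (hc : ChainSeq T σ r) {i : ℕ} (hi : i < r) :
    (σ (i+1)).2 ∈ (σ i).1 ∧ (σ (i+1)).2 ≠ (σ i).2 := by
  rw [step_snd hc hi]
  obtain ⟨a, -, c⟩ := exit_at h3 hc (le_of_lt hi)
  exact ⟨a, c⟩

lemma E_succ_ne (hc : ChainSeq T σ r) {i : ℕ} (hi : i < r) : (σ (i+1)).1 ≠ (σ i).1 := by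
  rw [step_fst hc hi]
  obtain ⟨hy1, hy2, hy3⟩ := exit_at h3 hc (le_of_lt hi)
  obtain ⟨-, -, hne, -⟩ := nextE_spec (CE_subset T (hc.1 i (le_of_lt hi)).1) hy1 hy2
  exact hne

/-- The two edges containing the link vertex `x i` (for `i ≥ 1`) are `E (i-1)` and `E i`. -/
lemma chain_pair (hc : ChainSeq T σ r) {i : ℕ} (h1 : 1 ≤ i) (hi : i ≤ r)
    {f : Finset V} (hf : f ∈ T) (hxf : (σ i).2 ∈ f) :
    f = (σ (i-1)).1 ∨ f = (σ i).1 := by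
  obtain ⟨hE, hx, hd⟩ := hc.1 i hi
  have hstep : i - 1 + 1 = i := by omega
  have hmem : (σ i).2 ∈ (σ (i-1)).1 := by
    have := (x_succ h3 hc (by omega : i - 1 < r)).1
    rw [hstep] at this
    exact this
  have hneq : (σ (i-1)).1 ≠ (σ i).1 := by
    have := E_succ_ne h3 hc (by omega : i - 1 < r)
    rw [hstep] at this
    exact this.symm
  rcases eq_or_eq_of_deg_two hd (CE_subset T (hc.1 (i-1) (by omega)).1) (CE_subset T hE)
    hneq hmem hx hf hxf with h | h
  · exact Or.inl h
  · exact Or.inr h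

end ChainFacts

end Stmt10Aux

namespace Stmt10Aux

variable {V : Type} [DecidableEq V] [Nonempty V]

open Finset

/-- Building an actual path from a chain segment with distinct edges/vertices. -/
lemma chain_path {T : Finset (Finset V)} (h3 : ThreeUniform T)
    {σ : ℕ → Finset V × V} {r : ℕ} (hc : ChainSeq T σ r)
    (hdE : ∀ i j, i ≤ r → j ≤ r → i < j → (σ i).1 ≠ (σ j).1)
    (hdx : ∀ i j, i ≤ r → j ≤ r → i < j → (σ i).2 ≠ (σ j).2)
    (hdy : ∀ i, i ≤ r → (σ i).2 ≠ exitl T (σ r).1 (σ r).2) :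
    ∃ Q : HPath V, Q.IsPathIn T ∧ Q.len = r + 1 ∧
      (∀ i, i ≤ r → Q.v i = (σ i).2) ∧
      Q.v (r + 1) = exitl T (σ r).1 (σ r).2 ∧
      (∀ j, 1 ≤ j → j ≤ r + 1 → Q.u j = pend T (σ (j-1)).1) ∧
      (∀ i, i ≤ r → Q.edgeAt i = (σ i).1) ∧
      Q.edgeSet = (Finset.range (r + 1)).image (fun i => (σ i).1) ∧
      Q.Connects (σ 0).2 (exitl T (σ r).1 (σ r).2) := by
  set yr := exitl T (σ r).1 (σ r).2 with hyr
  set Q : HPath V := ⟨r + 1, fun t => if t ≤ r then (σ t).2 else yr,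
    fun j => pend T (σ (j - 1)).1⟩ with hQdef
  have hQlen : Q.len = r + 1 := rfl
  have hvt : ∀ t, t ≤ r → Q.v t = (σ t).2 := by
    intro t ht
    show (if t ≤ r then (σ t).2 else yr) = (σ t).2
    rw [if_pos ht]
  have hvlast : Q.v (r + 1) = yr := by
    show (if r + 1 ≤ r then (σ (r+1)).2 else yr) = yr
    rw [if_neg (by omega)]
  have huj : ∀ j, Q.u j = pend T (σ (j - 1)).1 := fun j => rfl
  -- degree facts
  have hdeg2 : ∀ t, t ≤ r + 1 → degH T (Q.v t) = 2 := by
    intro t ht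
    rcases Nat.lt_or_ge t (r + 1) with h | h
    · rw [hvt t (by omega)]; exact (hc.1 t (by omega)).2.2
    · have : t = r + 1 := by omega
      rw [this, hvlast, hyr]
      exact (exit_at h3 hc (le_refl r)).2.1
  have hdeg1 : ∀ j, 1 ≤ j → j ≤ r + 1 → degH T (Q.u j) = 1 := by
    intro j h1 hj
    rw [huj]
    exact (pend_spec (hc.1 (j-1) (by omega)).1).2.1
  have hvinj : Set.InjOn Q.v (Set.Iic Q.len) := by
    intro s hs t ht hst
    simp only [Set.mem_Iic, hQlen] at hs ht
    rcases Nat.lt_or_ge s (r+1) with h's | h's <;> rcases Nat.lt_or_ge t (r+1) with h't | h't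
    · rw [hvt s (by omega), hvt t (by omega)] at hst
      rcases lt_trichotomy s t with h | h | h
      · exact absurd hst (hdx s t (by omega) (by omega) h)
      · exact h
      · exact absurd hst.symm (hdx t s (by omega) (by omega) h)
    · exfalso
      have ht1 : t = r + 1 := by omega
      rw [hvt s (by omega), ht1, hvlast] at hst
      exact hdy s (by omega) hst
    · exfalso
      have hs1 : s = r + 1 := by omega
      rw [hvt t (by omega), hs1, hvlast] at hst
      exact hdy t (by omega) hst.symm
    · omega
  have huinj : Set.InjOn Q.u (Set.Icc 1 Q.len) := by
    intro s hs t ht hst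
    simp only [Set.mem_Icc, hQlen] at hs ht
    by_contra hne
    have hEne : (σ (s-1)).1 ≠ (σ (t-1)).1 := by
      rcases lt_trichotomy (s-1) (t-1) with h | h | h
      · exact hdE (s-1) (t-1) (by omega) (by omega) h
      · omega
      · exact fun hh => hdE (t-1) (s-1) (by omega) (by omega) h hh.symm
    rw [huj, huj] at hst
    have hp1 := pend_spec (hc.1 (s-1) (by omega)).1
    have hp2 := pend_spec (hc.1 (t-1) (by omega)).1
    apply hEne
    apply eq_of_deg_one hp1.2.1 (CE_subset T (hc.1 (s-1) (by omega)).1)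
      (CE_subset T (hc.1 (t-1) (by omega)).1) hp1.1
    rw [hst]
    exact hp2.1
  have hvu : ∀ i, i ≤ Q.len → ∀ j, 1 ≤ j → j ≤ Q.len → Q.v i ≠ Q.u j := by
    intro i hi j h1 hj
    rw [hQlen] at hi hj
    intro h
    have ha := hdeg2 i hi
    have hb := hdeg1 j h1 hj
    rw [← h] at hb
    omega
  have hedge : ∀ i, i ≤ r → Q.edgeAt i = (σ i).1 := by
    intro i hi
    have hmem1 : Q.v i ∈ (σ i).1 := by rw [hvt i hi]; exact (hc.1 i hi).2.1
    have hmem2 : Q.u (i+1) ∈ (σ i).1 := by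
      rw [huj]
      have : i + 1 - 1 = i := by omega
      rw [this]
      exact (pend_spec (hc.1 i hi).1).1
    have hmem3 : Q.v (i+1) ∈ (σ i).1 := by
      rcases Nat.lt_or_ge i r with h | h
      · rw [hvt (i+1) (by omega), step_snd hc h]
        exact (exit_spec h3 (hc.1 i hi).1 (hc.1 i hi).2.1 (hc.1 i hi).2.2).1
      · have hir : i = r := by omega
        rw [hir, hvlast, hyr]
        exact (exit_at h3 hc (le_refl r)).1
    have hd12 : Q.v i ≠ Q.u (i+1) := hvu i (by omega) (i+1) (by omega) (by omega)
    have hd23 : Q.u (i+1) ≠ Q.v (i+1) := (hvu (i+1) (by omega) (i+1) (by omega) (by omega)).symm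
    have hd13 : Q.v i ≠ Q.v (i+1) := by
      intro h
      have := hvinj (Set.mem_Iic.mpr (by omega : i ≤ Q.len))
        (Set.mem_Iic.mpr (by omega : i + 1 ≤ Q.len)) h
      omega
    have := eq_triple_of_subset (h3 _ (CE_subset T (hc.1 i hi).1)) hmem1 hmem2 hmem3
      hd12 hd13 hd23
    rw [HPath.edgeAt]
    exact this.symm
  have hpath : Q.IsPathIn T := by
    refine ⟨?_, hvinj, huinj, hvu⟩
    intro i hi
    rw [hQlen] at hi
    rw [hedge i (by omega)]
    exact CE_subset T (hc.1 i (by omega)).1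
  refine ⟨Q, hpath, hQlen, hvt, hvlast, fun j _ _ => huj j, hedge, ?_, ?_⟩
  · rw [HPath.edgeSet, hQlen]
    apply Finset.image_congr
    intro i hi
    simp only [Finset.coe_range, Set.mem_Iio] at hi
    exact hedge i (by omega)
  · exact ⟨by rw [hQlen]; omega, Or.inl (hvt 0 (by omega)).symm,
      Or.inl (by rw [hQlen, hvlast])⟩

end Stmt10Aux

namespace Stmt10Aux

variable {V : Type} [DecidableEq V] [Nonempty V]

open Finset

theorem chain_distinct {T : Finset (Finset V)} (hsub : IsSubtree T) :
    ∀ r (σ : ℕ → Finset V × V), ChainSeq T σ r →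
      (∀ i j, i ≤ r → j ≤ r → i < j → (σ i).1 ≠ (σ j).1) ∧
      (∀ i j, i ≤ r → j ≤ r → i < j → (σ i).2 ≠ (σ j).2) ∧
      (∀ i, i ≤ r → (σ i).2 ≠ exitl T (σ r).1 (σ r).2) := by
  obtain ⟨h3, hlin, hconn⟩ := hsub
  have hsub' : IsSubtree T := ⟨h3, hlin, hconn⟩
  intro r
  induction r using Nat.strong_induction_on with
  | _ r ih =>
  intro σ hc
  -- part (i): distinct edges
  have hE : ∀ i j, i ≤ r → j ≤ r → i < j → (σ i).1 ≠ (σ j).1 := by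
    intro i j hi hj hij heq
    by_cases hcase : i = 0 ∧ j = r
    · obtain ⟨hi0, hjr⟩ := hcase
      rw [hi0, hjr] at heq
      -- cycle E 0 = E r
      rcases Nat.lt_or_ge r 2 with hr1 | hr2
      · -- r = 1
        have h1 : r = 1 := by omega
        rw [h1] at heq
        exact (E_succ_ne h3 hc (by omega : 0 < r)) heq.symm
      rcases Nat.lt_or_ge r 3 with hr2' | hr3
      · -- r = 2 : linearity violation
        have h2 : r = 2 := by omega
        have hx1E0 : (σ 1).2 ∈ (σ 0).1 := (x_succ h3 hc (by omega : 0 < r)).1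
        have hx1E1 : (σ 1).2 ∈ (σ 1).1 := (hc.1 1 (by omega)).2.1
        have hx2E1 : (σ 2).2 ∈ (σ 1).1 := by
          have := (x_succ h3 hc (by omega : 1 < r)).1
          exact this
        have hx2E0 : (σ 2).2 ∈ (σ 0).1 := by
          have : (σ 2).2 ∈ (σ 2).1 := (hc.1 2 (by omega)).2.1
          rw [h2] at heq
          rw [heq]; exact this
        have hx12 : (σ 2).2 ≠ (σ 1).2 := (x_succ h3 hc (by omega : 1 < r)).2
        have hne01 : (σ 0).1 ≠ (σ 1).1 := (E_succ_ne h3 hc (by omega : 0 < r)).symm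
        have hcard := hlin (σ 0).1 (CE_subset T (hc.1 0 (by omega)).1)
          (σ 1).1 (CE_subset T (hc.1 1 (by omega)).1) hne01
        have hpair : ({(σ 1).2, (σ 2).2} : Finset V) ⊆ (σ 0).1 ∩ (σ 1).1 := by
          intro w hw
          rcases Finset.mem_insert.mp hw with h | h
          · subst h; exact Finset.mem_inter.mpr ⟨hx1E0, hx1E1⟩
          · rw [Finset.mem_singleton] at h; subst h
            exact Finset.mem_inter.mpr ⟨hx2E0, hx2E1⟩
        have := Finset.card_le_card hpair
        rw [Finset.card_pair (Ne.symm hx12)] at this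
        omega
      · -- r ≥ 3 : two distinct paths between x 1 and x r
        have hinner := ih (r-1) (by omega) σ
          ⟨fun i hi => hc.1 i (by omega), fun i hi => hc.2 i (by omega)⟩
        -- x 1 ≠ x r
        have hx1E0 : (σ 1).2 ∈ (σ 0).1 := (x_succ h3 hc (by omega : 0 < r)).1
        have hxrEr : (σ r).2 ∈ (σ r).1 := (hc.1 r (le_refl r)).2.1
        have hxrE0 : (σ r).2 ∈ (σ 0).1 := by rw [heq]; exact hxrEr
        have hx1r : (σ 1).2 ≠ (σ r).2 := by
          intro hxx
          have hxrErm1 : (σ r).2 ∈ (σ (r-1)).1 := by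
            have := (x_succ h3 hc (by omega : r - 1 < r)).1
            have h' : r - 1 + 1 = r := by omega
            rw [h'] at this
            exact this
          have hx1Erm1 : (σ 1).2 ∈ (σ (r-1)).1 := by rw [hxx]; exact hxrErm1
          rcases chain_pair h3 hc (le_refl 1) (by omega)
            (CE_subset T (hc.1 (r-1) (by omega)).1) hx1Erm1 with h | h
          · exact hinner.1 0 (r-1) (by omega) (by omega) (by omega) h.symm
          · exact hinner.1 1 (r-1) (by omega) (by omega) (by omega) h.symm
        -- path along the chain from x 1 to x r
        have hshift : ChainSeq T (fun t => σ (1 + t)) (r - 2) := by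
          have := chainSeq_shift hc 1 (r-1) (by omega) (by omega)
          have h' : r - 1 - 1 = r - 2 := by omega
          rw [h'] at this
          exact this
        have hseg := ih (r-2) (by omega) (fun t => σ (1 + t)) hshift
        obtain ⟨Q2, hQ2path, hQ2len, hQ2v, hQ2vlast, hQ2u, hQ2e, hQ2es, hQ2conn⟩ :=
          chain_path h3 hshift hseg.1 hseg.2.1 hseg.2.2
        have hidx : 1 + (r - 2) = r - 1 := by omega
        have hlastconv : (fun t => σ (1 + t)) (r - 2) = σ (r - 1) := by
          show σ (1 + (r - 2)) = σ (r - 1)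
          rw [hidx]
        have hexit : exitl T (σ (1 + (r-2))).1 (σ (1 + (r-2))).2 = (σ r).2 := by
          rw [hidx]
          have := step_snd hc (by omega : r - 1 < r)
          have h' : r - 1 + 1 = r := by omega
          rw [h'] at this
          exact this.symm
        have hQ2conn' : Q2.Connects (σ 1).2 (σ r).2 := by
          rw [show (1:ℕ) + 0 = 1 from rfl, hexit] at hQ2conn
          exact hQ2conn
        -- single edge path from x 1 to x r through E 0
        obtain ⟨Q1, hQ1path, hQ1conn, hQ1es, -, -, -⟩ :=
          single_path h3 (CE_subset T (hc.1 0 (by omega)).1) hx1E0 hxrE0 hx1r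
        have hmem1 : (σ 1).2 ∈ hVerts T := mem_hVerts (CE_subset T (hc.1 0 (by omega)).1) hx1E0
        have hmem2 : (σ r).2 ∈ hVerts T := mem_hVerts (CE_subset T (hc.1 r (le_refl r)).1) hxrEr
        have heqsets := (hconn _ _ hmem1 hmem2 hx1r).2 Q1 Q2 hQ1path hQ1conn hQ2path hQ2conn'
        have hE0mem : (σ 0).1 ∈ Q2.edgeSet := by
          rw [← heqsets, hQ1es]; exact Finset.mem_singleton_self _
        rw [hQ2es] at hE0mem
        obtain ⟨t, ht, hteq⟩ := Finset.mem_image.mp hE0mem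
        have ht' := Finset.mem_range.mp ht
        exact hinner.1 0 (1 + t) (by omega) (by omega) (by omega) hteq.symm
    · -- non-spanning repeat: restrict to [i, j] and use induction
      have hlt : j - i < r := by omega
      have hshift := chainSeq_shift hc i j (by omega) (by omega)
      have hsml := ih (j - i) hlt (fun t => σ (i + t)) hshift
      have h0 : (fun t => σ (i + t)) 0 = σ i := by show σ (i + 0) = σ i; norm_num
      have h1 : (fun t => σ (i + t)) (j - i) = σ j := by
        show σ (i + (j - i)) = σ j
        congr 1
        omega
      have := hsml.1 0 (j - i) (by omega) (by omega) (by omega)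
      rw [show i + 0 = i from rfl, show i + (j - i) = j by omega] at this
      exact this heq
  -- part (ii): distinct link vertices
  have hX : ∀ i j, i ≤ r → j ≤ r → i < j → (σ i).2 ≠ (σ j).2 := by
    intro i j hi hj hij heq
    rcases Nat.eq_or_lt_of_le (by omega : i + 1 ≤ j) with hj1 | hj2
    · have := (x_succ h3 hc (by omega : i < r)).2
      rw [hj1] at this
      exact this heq.symm
    · have hxjmem : (σ j).2 ∈ (σ (j-1)).1 := by
        have := (x_succ h3 hc (by omega : j - 1 < r)).1
        have h' : j - 1 + 1 = j := by omega
        rw [h'] at this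
        exact this
      rcases Nat.eq_zero_or_pos i with hi0 | hipos
      · -- i = 0 : use the pair at x j
        have hx0E0 : (σ i).2 ∈ (σ i).1 := (hc.1 i hi).2.1
        have hxjE0 : (σ j).2 ∈ (σ i).1 := by rw [← heq]; exact hx0E0
        rcases chain_pair h3 hc (by omega : 1 ≤ j) hj
          (CE_subset T (hc.1 i hi).1) hxjE0 with h | h
        · exact hE i (j-1) hi (by omega) (by omega) h
        · exact hE i j hi hj (by omega) h
      · -- i ≥ 1 : use the pair at x i
        have hximem : (σ i).2 ∈ (σ (j-1)).1 := by rw [heq]; exact hxjmem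
        rcases chain_pair h3 hc hipos hi
          (CE_subset T (hc.1 (j-1) (by omega)).1) hximem with h | h
        · exact hE (i-1) (j-1) (by omega) (by omega) (by omega) h.symm
        · exact hE i (j-1) hi (by omega) (by omega) h.symm
  refine ⟨hE, hX, ?_⟩
  -- part (iii): the final exit vertex is new
  intro i hi heq
  have hyE : exitl T (σ r).1 (σ r).2 ∈ (σ r).1 := (exit_at h3 hc (le_refl r)).1
  rcases Nat.eq_or_lt_of_le hi with hir | hilt
  · -- i = r : exit ≠ entry
    have := (exit_at h3 hc (le_refl r)).2.2
    rw [hir] at heq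
    exact this heq.symm
  · rcases Nat.eq_zero_or_pos i with hi0 | hipos
    · -- i = 0 : a closed cycle, contradiction with unique paths
      subst hi0
      have hEne : (σ 0).1 ≠ (σ r).1 := hE 0 r (by omega) (le_refl r) hilt
      have hxne : (σ 0).2 ≠ (σ r).2 := hX 0 r (by omega) (le_refl r) hilt
      have hx0Er : (σ 0).2 ∈ (σ r).1 := by rw [heq]; exact hyE
      have hxrEr : (σ r).2 ∈ (σ r).1 := (hc.1 r (le_refl r)).2.1
      obtain ⟨Q1, hQ1path, hQ1conn, hQ1es, -, -, -⟩ :=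
        single_path h3 (CE_subset T (hc.1 r (le_refl r)).1) hx0Er hxrEr hxne
      have hrest : ChainSeq T σ (r-1) :=
        ⟨fun t ht => hc.1 t (by omega), fun t ht => hc.2 t (by omega)⟩
      have hseg := ih (r-1) (by omega) σ hrest
      obtain ⟨Q2, hQ2path, hQ2len, hQ2v, hQ2vlast, hQ2u, hQ2e, hQ2es, hQ2conn⟩ :=
        chain_path h3 hrest hseg.1 hseg.2.1 hseg.2.2
      have hexit : exitl T (σ (r-1)).1 (σ (r-1)).2 = (σ r).2 := by
        have := step_snd hc (by omega : r - 1 < r)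
        have h' : r - 1 + 1 = r := by omega
        rw [h'] at this
        exact this.symm
      rw [hexit] at hQ2conn
      have hmem1 : (σ 0).2 ∈ hVerts T :=
        mem_hVerts (CE_subset T (hc.1 r (le_refl r)).1) hx0Er
      have hmem2 : (σ r).2 ∈ hVerts T :=
        mem_hVerts (CE_subset T (hc.1 r (le_refl r)).1) hxrEr
      have heqsets := (hconn _ _ hmem1 hmem2 hxne).2 Q1 Q2 hQ1path hQ1conn hQ2path hQ2conn
      have hErmem : (σ r).1 ∈ Q2.edgeSet := by
        rw [← heqsets, hQ1es]; exact Finset.mem_singleton_self _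
      rw [hQ2es] at hErmem
      obtain ⟨t, ht, hteq⟩ := Finset.mem_image.mp hErmem
      have ht' := Finset.mem_range.mp ht
      exact hE t r (by omega) (le_refl r) (by omega) hteq
    · -- 1 ≤ i < r : pair at x i
      have hximem : (σ i).2 ∈ (σ r).1 := by rw [heq]; exact hyE
      rcases chain_pair h3 hc hipos (by omega)
        (CE_subset T (hc.1 r (le_refl r)).1) hximem with h | h
      · exact hE (i-1) r (by omega) (le_refl r) (by omega) h.symm
      · exact hE i r (by omega) (le_refl r) (by omega) h.symm

end Stmt10Aux

namespace Stmt10Aux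

variable {V : Type} [DecidableEq V] [Nonempty V]

open Finset

noncomputable def walkS (T : Finset (Finset V)) (s : Finset V × V) (n : ℕ) : Finset V × V :=
  (stepS T)^[n] s

lemma walkS_zero (T : Finset (Finset V)) (s : Finset V × V) : walkS T s 0 = s := rfl

lemma walkS_succ (T : Finset (Finset V)) (s : Finset V × V) (n : ℕ) :
    walkS T s (n + 1) = stepS T (walkS T s n) := Function.iterate_succ_apply' _ _ _

lemma walkS_add (T : Finset (Finset V)) (s : Finset V × V) (i t : ℕ) :
    walkS T s (i + t) = walkS T (walkS T s i) t := by
  rw [walkS, walkS, walkS, Nat.add_comm, Function.iterate_add_apply]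

lemma exists_stop {T : Finset (Finset V)} (hsub : IsSubtree T) (s : Finset V × V) :
    ∃ n, ¬ GoodS T (walkS T s n) := by
  by_contra h
  push_neg at h
  have hc : ChainSeq T (walkS T s) T.card :=
    ⟨fun i _ => h i, fun i _ => walkS_succ T s i⟩
  have hd := (chain_distinct hsub T.card (walkS T s) hc).1
  have hinj : Set.InjOn (fun i => (walkS T s i).1) ↑(Finset.range (T.card + 1)) := by
    intro a ha b hb hab
    simp only [Finset.coe_range, Set.mem_Iio] at ha hb
    by_contra hne
    rcases lt_trichotomy a b with h' | h' | h'
    · exact hd a b (by omega) (by omega) h' hab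
    · exact hne h'
    · exact hd b a (by omega) (by omega) h' hab.symm
  have hsubT : (Finset.range (T.card + 1)).image (fun i => (walkS T s i).1) ⊆ T := by
    intro f hf
    obtain ⟨i, hi, rfl⟩ := Finset.mem_image.mp hf
    exact CE_subset T (h i).1
  have h1 := Finset.card_le_card hsubT
  rw [Finset.card_image_of_injOn hinj, Finset.card_range] at h1
  omega

open Classical in
noncomputable def cntS (T : Finset (Finset V)) (s : Finset V × V) : ℕ :=
  if h : ∃ n, ¬ GoodS T (walkS T s n) then Nat.find h else 0

section CntFacts

variable {T : Finset (Finset V)} (hsub : IsSubtree T)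

include hsub

lemma cnt_stop (s : Finset V × V) : ¬ GoodS T (walkS T s (cntS T s)) := by
  classical
  rw [cntS, dif_pos (exists_stop hsub s)]
  exact Nat.find_spec (exists_stop hsub s)

lemma cnt_min (s : Finset V × V) {m : ℕ} (hm : m < cntS T s) : GoodS T (walkS T s m) := by
  classical
  rw [cntS, dif_pos (exists_stop hsub s)] at hm
  have := Nat.find_min (exists_stop hsub s) hm
  tauto

lemma cnt_le (s : Finset V × V) {m : ℕ} (hm : ¬ GoodS T (walkS T s m)) : cntS T s ≤ m := by
  classical
  rw [cntS, dif_pos (exists_stop hsub s)]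
  exact Nat.find_le hm

lemma cnt_pos {s : Finset V × V} (hgood : GoodS T s) : 1 ≤ cntS T s := by
  by_contra h
  have h0 : cntS T s = 0 := by omega
  have := cnt_stop hsub s
  rw [h0, walkS_zero] at this
  exact this hgood

lemma walk_chainSeq {s : Finset V × V} (hgood : GoodS T s) :
    ChainSeq T (walkS T s) (cntS T s - 1) := by
  have h1 := cnt_pos hsub hgood
  exact ⟨fun i hi => cnt_min hsub s (by omega), fun i hi => walkS_succ T s i⟩

end CntFacts

/-- A start state: the entry link's other edge is not a chain edge. -/
def IsStart (T : Finset (Finset V)) (s : Finset V × V) : Prop :=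
  GoodS T s ∧ nextE T s.1 s.2 ∉ CEdges T

/-- The reversed end state of the chain through `s`. -/
noncomputable def endState (T : Finset (Finset V)) (s : Finset V × V) : Finset V × V :=
  ((walkS T s (cntS T s - 1)).1,
    exitl T (walkS T s (cntS T s - 1)).1 (walkS T s (cntS T s - 1)).2)

/-- The edges of the chain through `s`. -/
noncomputable def chainE (T : Finset (Finset V)) (s : Finset V × V) : Finset (Finset V) :=
  (Finset.range (cntS T s)).image (fun i => (walkS T s i).1)

section WalkFacts

variable {T : Finset (Finset V)} (hsub : IsSubtree T)

include hsub

lemma stop_reason {s : Finset V × V} (hgood : GoodS T s) :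
    (walkS T s (cntS T s)).1 ∉ CEdges T := by
  have h3 := hsub.1
  have hp := cnt_pos hsub hgood
  set p := cntS T s - 1 with hpdef
  have hpg : GoodS T (walkS T s p) := cnt_min hsub s (by omega)
  have hstep : walkS T s (cntS T s) = stepS T (walkS T s p) := by
    have : cntS T s = p + 1 := by omega
    rw [this, walkS_succ]
  have hstop := cnt_stop hsub s
  intro hCE
  apply hstop
  rw [hstep]
  obtain ⟨hE, hx, hd⟩ := hpg
  obtain ⟨hy1, hy2, hy3, -⟩ := exit_spec h3 hE hx hd
  obtain ⟨hn1, hn2, hn3, -⟩ := nextE_spec (CE_subset T hE) hy1 hy2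
  rw [hstep] at hCE
  exact ⟨hCE, hn2, hy2⟩

lemma exitl_exitl {e : Finset V} {x : V} (he : e ∈ CEdges T) (hx : x ∈ e)
    (hd : degH T x = 2) : exitl T e (exitl T e x) = x := by
  have h3 := hsub.1
  obtain ⟨hy1, hy2, hy3, -⟩ := exit_spec h3 he hx hd
  obtain ⟨-, -, -, huniq⟩ := exit_spec h3 he hy1 hy2
  exact (huniq x hx hd (fun h => hy3 h.symm)).symm

/-- One reversed step. -/
lemma rev_step {σ : ℕ → Finset V × V} {p : ℕ} (hc : ChainSeq T σ p) {j : ℕ}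
    (hj1 : 1 ≤ j) (hj : j ≤ p) :
    stepS T ((σ j).1, exitl T (σ j).1 (σ j).2)
      = ((σ (j-1)).1, exitl T (σ (j-1)).1 (σ (j-1)).2) := by
  have h3 := hsub.1
  obtain ⟨hE, hx, hd⟩ := hc.1 j hj
  have hxy := exitl_exitl hsub hE hx hd
  have hj' : j - 1 + 1 = j := by omega
  have hxmem : (σ j).2 ∈ (σ (j-1)).1 := by
    have := (x_succ h3 hc (by omega : j - 1 < p)).1
    rw [hj'] at this
    exact this
  have hEne : (σ (j-1)).1 ≠ (σ j).1 := by
    have := E_succ_ne h3 hc (by omega : j - 1 < p)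
    rw [hj'] at this
    exact this.symm
  have hnext : nextE T (σ j).1 (σ j).2 = (σ (j-1)).1 := by
    obtain ⟨-, -, -, huniq⟩ := nextE_spec (CE_subset T hE) hx hd
    exact (huniq _ (CE_subset T (hc.1 (j-1) (by omega)).1) hxmem hEne).symm
  have hy : exitl T (σ (j-1)).1 (σ (j-1)).2 = (σ j).2 := by
    have := step_snd hc (by omega : j - 1 < p)
    rw [hj'] at this
    exact this.symm
  rw [stepS]
  simp only
  rw [hxy, hnext, hy]

/-- The walk from the reversed state retraces the chain backwards. -/
lemma rev_walk {s : Finset V × V} (hgood : GoodS T s) {q : ℕ} (hq : q ≤ cntS T s - 1) :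
    ∀ i, i ≤ q → walkS T ((walkS T s q).1, exitl T (walkS T s q).1 (walkS T s q).2) i
      = ((walkS T s (q - i)).1, exitl T (walkS T s (q - i)).1 (walkS T s (q - i)).2) := by
  have hc := walk_chainSeq hsub hgood
  intro i
  induction i with
  | zero => intro _; rw [walkS_zero]; norm_num
  | succ i ihi =>
    intro hi
    rw [walkS_succ, ihi (by omega)]
    have h1 : 1 ≤ q - i := by omega
    have h2 : q - i ≤ cntS T s - 1 := by omega
    have := rev_step hsub hc h1 h2
    rw [this]
    have h' : q - i - 1 = q - (i + 1) := by omega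
    rw [h']

lemma endState_good {s : Finset V × V} (hgood : GoodS T s) : GoodS T (endState T s) := by
  have h3 := hsub.1
  have hp := cnt_pos hsub hgood
  have hpg : GoodS T (walkS T s (cntS T s - 1)) := cnt_min hsub s (by omega)
  obtain ⟨hE, hx, hd⟩ := hpg
  obtain ⟨hy1, hy2, -, -⟩ := exit_spec h3 hE hx hd
  exact ⟨hE, hy1, hy2⟩

lemma endState_isStart {s : Finset V × V} (hgood : GoodS T s) : IsStart T (endState T s) := by
  refine ⟨endState_good hsub hgood, ?_⟩
  have hp := cnt_pos hsub hgood
  have hstep : walkS T s (cntS T s) = stepS T (walkS T s (cntS T s - 1)) := by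
    have : cntS T s = (cntS T s - 1) + 1 := by omega
    conv_lhs => rw [this]
    rw [walkS_succ]
  have := stop_reason hsub hgood
  rw [hstep] at this
  exact this

lemma cnt_endState {s : Finset V × V} (hst : IsStart T s) :
    cntS T (endState T s) = cntS T s := by
  have h3 := hsub.1
  obtain ⟨hgood, hnext⟩ := hst
  have hp := cnt_pos hsub hgood
  set p := cntS T s - 1 with hpdef
  have hrev := rev_walk hsub hgood (le_refl p)
  -- good through p
  have hgoodrev : ∀ i, i ≤ p → GoodS T (walkS T (endState T s) i) := by
    intro i hi
    rw [endState, hrev i hi]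
    have hg : GoodS T (walkS T s (p - i)) := cnt_min hsub s (by omega)
    obtain ⟨hE, hx, hd⟩ := hg
    obtain ⟨hy1, hy2, -, -⟩ := exit_spec h3 hE hx hd
    exact ⟨hE, hy1, hy2⟩
  -- stopped at p + 1
  have hstop : ¬ GoodS T (walkS T (endState T s) (p + 1)) := by
    rw [walkS_succ, endState, hrev p (le_refl p)]
    have h0 : p - p = 0 := by omega
    rw [h0, walkS_zero]
    obtain ⟨hE, hx, hd⟩ := hgood
    have hxy := exitl_exitl hsub hE hx hd
    rw [stepS]
    simp only
    rw [hxy]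
    intro hgd
    exact hnext hgd.1
  have hle := cnt_le hsub _ hstop
  have hgt : p < cntS T (endState T s) := by
    by_contra hcon
    have : cntS T (endState T s) ≤ p := by omega
    have := hgoodrev _ this
    exact cnt_stop hsub (endState T s) this
  omega

lemma endState_endState {s : Finset V × V} (hst : IsStart T s) :
    endState T (endState T s) = s := by
  obtain ⟨hgood, hnext⟩ := hst
  have hp := cnt_pos hsub hgood
  set p := cntS T s - 1 with hpdef
  have hcnt : cntS T (endState T s) = cntS T s := cnt_endState hsub ⟨hgood, hnext⟩
  have hrev := rev_walk hsub hgood (le_refl p)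
  rw [endState, hcnt]
  have hlast : walkS T (endState T s) (cntS T s - 1)
      = ((walkS T s 0).1, exitl T (walkS T s 0).1 (walkS T s 0).2) := by
    rw [endState]
    have := hrev p (le_refl p)
    have h0 : p - p = 0 := by omega
    rw [h0] at this
    exact this
  rw [hlast, walkS_zero]
  obtain ⟨hE, hx, hd⟩ := hgood
  have hxy := exitl_exitl hsub hE hx hd
  simp only
  rw [hxy]

lemma endState_ne {s : Finset V × V} (hgood : GoodS T s) : endState T s ≠ s := by
  have h3 := hsub.1
  have hp := cnt_pos hsub hgood
  set p := cntS T s - 1 with hpdef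
  rcases Nat.eq_zero_or_pos p with h0 | hpos
  · rw [endState, ← hpdef, h0, walkS_zero]
    intro h
    have h2 := congrArg Prod.snd h
    simp only at h2
    obtain ⟨hE, hx, hd⟩ := hgood
    exact (exit_spec h3 hE hx hd).2.2.1 h2
  · rw [endState, ← hpdef]
    intro h
    have h1 := congrArg Prod.fst h
    simp only at h1
    have hc := walk_chainSeq hsub hgood
    have := (chain_distinct hsub p (walkS T s) hc).1 0 p (by omega) (le_refl p) (by omega)
    rw [walkS_zero] at this
    exact this h1.symm

lemma chainE_endState {s : Finset V × V} (hst : IsStart T s) :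
    chainE T (endState T s) = chainE T s := by
  obtain ⟨hgood, hnext⟩ := hst
  have hp := cnt_pos hsub hgood
  set p := cntS T s - 1 with hpdef
  have hcnt : cntS T (endState T s) = cntS T s := cnt_endState hsub ⟨hgood, hnext⟩
  have hrev := rev_walk hsub hgood (le_refl p)
  rw [chainE, chainE, hcnt]
  ext f
  simp only [Finset.mem_image, Finset.mem_range]
  constructor
  · rintro ⟨i, hi, rfl⟩
    refine ⟨p - i, by omega, ?_⟩
    rw [endState] at *
    rw [hrev i (by omega)]
  · rintro ⟨j, hj, rfl⟩
    refine ⟨p - j, by omega, ?_⟩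
    rw [endState] at *
    rw [hrev (p - j) (by omega)]
    have h' : p - (p - j) = j := by omega
    rw [h']

end WalkFacts

end Stmt10Aux

namespace Stmt10Aux

variable {V : Type} [DecidableEq V] [Nonempty V]

open Finset

section Cover

variable {T : Finset (Finset V)} (hsub : IsSubtree T)

include hsub

lemma chainE_subset_CE (s : Finset V × V) : chainE T s ⊆ CEdges T := by
  intro f hf
  obtain ⟨i, hi, rfl⟩ := Finset.mem_image.mp hf
  exact (cnt_min hsub s (Finset.mem_range.mp hi)).1

lemma chainE_card {s : Finset V × V} (hgood : GoodS T s) :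
    (chainE T s).card = cntS T s := by
  have hp := cnt_pos hsub hgood
  have hc := walk_chainSeq hsub hgood
  have hd := (chain_distinct hsub (cntS T s - 1) (walkS T s) hc).1
  rw [chainE, Finset.card_image_of_injOn, Finset.card_range]
  intro a ha b hb hab
  simp only [Finset.coe_range, Set.mem_Iio] at ha hb
  by_contra hne
  rcases lt_trichotomy a b with h' | h' | h'
  · exact hd a b (by omega) (by omega) h' hab
  · exact hne h'
  · exact hd b a (by omega) (by omega) h' hab.symm

lemma chain_cover {e : Finset V} (he : e ∈ CEdges T) :
    ∃ s, IsStart T s ∧ e ∈ chainE T s := by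
  have h3 := hsub.1
  have hl := CE_links_card h3 he
  obtain ⟨x₀, hx₀⟩ := Finset.card_pos.mp (by omega : 0 < (e.filter fun z => degH T z = 2).card)
  obtain ⟨hx₀e, hdx₀⟩ := Finset.mem_filter.mp hx₀
  have hgood : GoodS T (e, x₀) := ⟨he, hx₀e, hdx₀⟩
  have hp := cnt_pos hsub hgood
  set p := cntS T (e, x₀) - 1 with hpdef
  refine ⟨endState T (e, x₀), endState_isStart hsub hgood, ?_⟩
  have hrev := rev_walk hsub hgood (le_refl p)
  have hgoodrev : ∀ i, i ≤ p → GoodS T (walkS T (endState T (e, x₀)) i) := by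
    intro i hi
    rw [endState, hrev i hi]
    have hg : GoodS T (walkS T (e, x₀) (p - i)) := cnt_min hsub _ (by omega)
    obtain ⟨hE, hx, hd⟩ := hg
    obtain ⟨hy1, hy2, -, -⟩ := exit_spec h3 hE hx hd
    exact ⟨hE, hy1, hy2⟩
  have hgt : p < cntS T (endState T (e, x₀)) := by
    by_contra hcon
    exact cnt_stop hsub (endState T (e, x₀)) (hgoodrev _ (by omega))
  rw [chainE]
  apply Finset.mem_image.mpr
  refine ⟨p, Finset.mem_range.mpr (by omega), ?_⟩
  rw [endState, hrev p (le_refl p)]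
  have h0 : p - p = 0 := by omega
  rw [h0, walkS_zero]

lemma chain_overlap {s s' : Finset V × V} (hst : IsStart T s) (hst' : IsStart T s')
    {f : Finset V} (hf : f ∈ chainE T s) (hf' : f ∈ chainE T s') :
    s' = s ∨ s' = endState T s := by
  have h3 := hsub.1
  obtain ⟨i, hi', hieq⟩ := Finset.mem_image.mp hf
  obtain ⟨j, hj', hjeq⟩ := Finset.mem_image.mp hf'
  have hi := Finset.mem_range.mp hi'
  have hj := Finset.mem_range.mp hj'
  have hgs := hst.1
  have hgs' := hst'.1
  have hga : GoodS T (walkS T s i) := cnt_min hsub s hi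
  have hgb : GoodS T (walkS T s' j) := cnt_min hsub s' hj
  by_cases hsame : (walkS T s i).2 = (walkS T s' j).2
  · -- identical states
    left
    have hab : walkS T s i = walkS T s' j := by
      apply Prod.ext
      · rw [hieq, hjeq]
      · exact hsame
    have htail : ∀ t, walkS T s (i + t) = walkS T s' (j + t) := by
      intro t
      rw [walkS_add, walkS_add, hab]
    have hcnts : cntS T s' = j + (cntS T s - i) := by
      have hstop : ¬ GoodS T (walkS T s' (j + (cntS T s - i))) := by
        rw [← htail]
        have : i + (cntS T s - i) = cntS T s := by omega
        rw [this]
        exact cnt_stop hsub s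
      have hle := cnt_le hsub _ hstop
      rcases Nat.lt_or_ge (cntS T s') (j + (cntS T s - i)) with hlt | hge
      · exfalso
        have ht0 : cntS T s' = j + (cntS T s' - j) := by omega
        have hgood2 : GoodS T (walkS T s' (j + (cntS T s' - j))) := by
          rw [← htail]
          exact cnt_min hsub s (by omega)
        rw [← ht0] at hgood2
        exact cnt_stop hsub s' hgood2
      · omega
    have hlasteq : walkS T s (cntS T s - 1) = walkS T s' (cntS T s' - 1) := by
      have h1 : cntS T s - 1 = i + (cntS T s - i - 1) := by omega
      have h2 : cntS T s' - 1 = j + (cntS T s - i - 1) := by omega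
      rw [h1, h2, htail]
    have hends : endState T s = endState T s' := by
      rw [endState, endState, hlasteq]
    have := endState_endState hsub hst
    rw [hends, endState_endState hsub hst'] at this
    exact this
  · -- opposite directions
    right
    obtain ⟨hEa, hxa, hda⟩ := hga
    obtain ⟨hEb, hxb, hdb⟩ := hgb
    have hbexit : (walkS T s' j).2 = exitl T (walkS T s i).1 (walkS T s i).2 := by
      obtain ⟨-, -, -, huniq⟩ := exit_spec h3 hEa hxa hda
      apply huniq
      · rw [hieq, ← hjeq]; exact hxb
      · exact hdb
      · exact fun h => hsame h.symm
    have hbeq : walkS T s' j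
        = ((walkS T s i).1, exitl T (walkS T s i).1 (walkS T s i).2) := by
      apply Prod.ext
      · rw [hieq, hjeq]
      · exact hbexit
    have hrev := rev_walk hsub hgs (by omega : i ≤ cntS T s - 1)
    have htail : ∀ t, t ≤ i → walkS T s' (j + t)
        = ((walkS T s (i - t)).1, exitl T (walkS T s (i - t)).1 (walkS T s (i - t)).2) := by
      intro t ht
      rw [walkS_add, hbeq]
      exact hrev t ht
    -- the walk from s' dies at j + i + 1
    have hstop : ¬ GoodS T (walkS T s' (j + i + 1)) := by
      have : j + i + 1 = j + i + 1 := rfl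
      rw [show j + i + 1 = (j + i) + 1 from rfl, walkS_succ, htail i (le_refl i)]
      have h0 : i - i = 0 := by omega
      rw [h0, walkS_zero]
      obtain ⟨hE, hx, hd⟩ := hgs
      have hxy := exitl_exitl hsub hE hx hd
      rw [stepS]
      simp only
      rw [hxy]
      intro hgd
      exact hst.2 hgd.1
    have hcnt' : cntS T s' = j + i + 1 := by
      have hle := cnt_le hsub _ hstop
      rcases Nat.lt_or_ge (cntS T s') (j + i + 1) with hlt | hge
      · exfalso
        have ht0 : cntS T s' = j + (cntS T s' - j) := by omega
        have hgood2 : GoodS T (walkS T s' (cntS T s')) := by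
          rw [ht0, htail (cntS T s' - j) (by omega)]
          have hg : GoodS T (walkS T s (i - (cntS T s' - j))) := cnt_min hsub s (by omega)
          obtain ⟨hE, hx, hd⟩ := hg
          obtain ⟨hy1, hy2, -, -⟩ := exit_spec h3 hE hx hd
          exact ⟨hE, hy1, hy2⟩
        exact cnt_stop hsub s' hgood2
      · omega
    have hends' : endState T s' = s := by
      rw [endState, hcnt']
      have h1 : j + i + 1 - 1 = j + i := by omega
      rw [h1, htail i (le_refl i)]
      have h0 : i - i = 0 := by omega
      rw [h0, walkS_zero]
      obtain ⟨hE, hx, hd⟩ := hgs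
      have hxy := exitl_exitl hsub hE hx hd
      simp only
      rw [hxy]
    rw [← hends', endState_endState hsub hst']
end Cover

/-- Transversal of a fixed-point-free involution on a finite set. -/
lemma exists_transversal {α : Type} [DecidableEq α] :
    ∀ (n : ℕ) (S : Finset α) (τ : α → α), S.card = n → (∀ a ∈ S, τ a ∈ S) →
    (∀ a ∈ S, τ (τ a) = a) → (∀ a ∈ S, τ a ≠ a) →
    ∃ R ⊆ S, (∀ a ∈ S, a ∈ R ∨ τ a ∈ R) ∧ (∀ a ∈ R, τ a ∉ R) := by
  intro n
  induction n using Nat.strong_induction_on with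
  | _ n ih =>
  intro S τ hcard h1 h2 h3
  rcases Finset.eq_empty_or_nonempty S with hS | ⟨a, ha⟩
  · exact ⟨∅, Finset.empty_subset S, by simp [hS], by simp⟩
  · set S' := (S.erase a).erase (τ a) with hS'
    have hτa : τ a ∈ S := h1 a ha
    have hcard' : S'.card < n := by
      rw [hS']
      have h4 := Finset.card_erase_le (a := τ a) (s := S.erase a)
      have h5 := Finset.card_erase_of_mem ha
      have h6 := Finset.card_pos.mpr ⟨a, ha⟩
      omega
    have hsub' : S' ⊆ S := fun x hx =>
      Finset.mem_of_mem_erase (Finset.mem_of_mem_erase hx)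
    have hmemS' : ∀ x, x ∈ S' ↔ x ∈ S ∧ x ≠ a ∧ x ≠ τ a := by
      intro x
      rw [hS']
      constructor
      · intro hx
        exact ⟨hsub' hx, Finset.ne_of_mem_erase (Finset.mem_of_mem_erase hx),
          Finset.ne_of_mem_erase hx⟩
      · rintro ⟨hxS, hxa, hxτ⟩
        exact Finset.mem_erase.mpr ⟨hxτ, Finset.mem_erase.mpr ⟨hxa, hxS⟩⟩
    have hmap : ∀ x ∈ S', τ x ∈ S' := by
      intro x hx
      obtain ⟨hxS, hxa, hxτ⟩ := (hmemS' x).mp hx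
      refine (hmemS' (τ x)).mpr ⟨h1 x hxS, ?_, ?_⟩
      · intro h
        apply hxτ
        rw [← h2 x hxS, h]
      · intro h
        apply hxa
        have := congrArg τ h
        rw [h2 x hxS, h2 a ha] at this
        exact this
    obtain ⟨R', hR'sub, hR'cov, hR'pair⟩ := ih S'.card (by omega) S' τ rfl hmap
      (fun x hx => h2 x (hsub' hx)) (fun x hx => h3 x (hsub' hx))
    refine ⟨insert a R', ?_, ?_, ?_⟩
    · intro x hx
      rcases Finset.mem_insert.mp hx with h | h
      · subst h; exact ha
      · exact hsub' (hR'sub h)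
    · intro b hb
      by_cases hba : b = a
      · subst hba; left; exact Finset.mem_insert_self _ _
      by_cases hbτ : b = τ a
      · subst hbτ
        right
        rw [h2 a ha]
        exact Finset.mem_insert_self _ _
      · have hbS' : b ∈ S' := (hmemS' b).mpr ⟨hb, hba, hbτ⟩
        rcases hR'cov b hbS' with h | h
        · left; exact Finset.mem_insert_of_mem h
        · right; exact Finset.mem_insert_of_mem h
    · intro c hc
      rcases Finset.mem_insert.mp hc with h | h
      · rw [h]
        intro hmem
        rcases Finset.mem_insert.mp hmem with h' | h'
        · exact h3 a ha h'
        · have := hR'sub h'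
          exact ((hmemS' (τ a)).mp this).2.2 rfl
      · intro hmem
        rcases Finset.mem_insert.mp hmem with h' | h'
        · have hcS' := hR'sub h
          have : c = τ a := by
            have := congrArg τ h'
            rw [h2 c (hsub' hcS')] at this
            exact this
          exact ((hmemS' c).mp hcS').2.2 this
        · exact hR'pair c h h'

end Stmt10Aux

namespace Stmt10Aux

variable {V : Type} [DecidableEq V] [Nonempty V]

open Finset

lemma segment_path {T : Finset (Finset V)} (hsub : IsSubtree T) {m : ℕ} (hm : 1 ≤ m)
    {s : Finset V × V} (hgood : GoodS T s) {a : ℕ} (ha : a + m ≤ cntS T s - 1) :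
    ∃ Q : HPath V, Q.IsPathIn T ∧ Q.len = m + 1 ∧
      Q.edgeSet = (Finset.range (m + 1)).image (fun i => (walkS T s (a + i)).1) ∧
      (∀ e ∈ T, e ∉ Q.edgeSet → ∀ x ∈ e, x ∈ Q.verts →
        x ∈ ({Q.v 0, Q.u 1, Q.u Q.len, Q.v Q.len} : Finset V)) ∧
      (∀ i, 1 ≤ i → i ≤ m - 1 → Q.u (i + 1) ∈ Q.verts ∧
        Q.u (i + 1) ∉ Q.edgeAt 0 ∧ Q.u (i + 1) ∉ Q.edgeAt (Q.len - 1)) := by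
  have h3 := hsub.1
  have hp := cnt_pos hsub hgood
  set σ' : ℕ → Finset V × V := fun i => walkS T s (a + i) with hσ'
  have hc : ChainSeq T σ' m := by
    constructor
    · intro i hi
      exact cnt_min hsub s (by omega)
    · intro i hi
      show walkS T s (a + (i + 1)) = stepS T (walkS T s (a + i))
      rw [show a + (i + 1) = (a + i) + 1 from rfl, walkS_succ]
  obtain ⟨hdE, hdx, hdy⟩ := chain_distinct hsub m σ' hc
  obtain ⟨Q, hQpath, hQlen, hQv, hQvlast, hQu, hQe, hQes, hQconn⟩ :=
    chain_path h3 hc hdE hdx hdy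
  refine ⟨Q, hQpath, hQlen, ?_, ?_, ?_⟩
  · rw [hQes]
  · -- semi-bareness
    intro e heT henot x hxe hxv
    rcases verts_cases hxv with ⟨τ, hτ, hxτ⟩ | ⟨j, hj1, hj2, hxj⟩
    · rw [hQlen] at hτ
      rcases Nat.eq_zero_or_pos τ with hτ0 | hτpos
      · subst hτ0
        rw [hxτ]
        simp
      rcases Nat.eq_or_lt_of_le hτ with hτlast | hτlt
      · rw [hxτ, hτlast, ← hQlen]
        simp
      · -- interior link vertex: its edges are on the path
        exfalso
        have hτm : τ ≤ m := by omega
        have hxmem : (σ' τ).2 ∈ e := by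
          rw [← hQv τ hτm, ← hxτ]
          exact hxe
        rcases chain_pair h3 hc hτpos hτm heT hxmem with h | h
        · apply henot
          rw [h, ← hQe (τ - 1) (by omega)]
          exact mem_edgeSet_iff.mpr ⟨τ - 1, by omega, rfl⟩
        · apply henot
          rw [h, ← hQe τ (by omega)]
          exact mem_edgeSet_iff.mpr ⟨τ, by omega, rfl⟩
    · -- pendant vertex: its unique edge is on the path
      exfalso
      rw [hQlen] at hj2
      have hgj : GoodS T (σ' (j - 1)) := hc.1 (j - 1) (by omega)
      have hpend := pend_spec hgj.1
      have hxq : x = pend T (σ' (j-1)).1 := by rw [hxj, hQu j hj1 (by omega)]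
      have heeq : e = (σ' (j-1)).1 := by
        apply eq_of_deg_one hpend.2.1 heT (CE_subset T hgj.1) _ hpend.1
        rw [← hxq]; exact hxe
      apply henot
      rw [heeq, ← hQe (j - 1) (by omega)]
      exact mem_edgeSet_iff.mpr ⟨j - 1, by omega, rfl⟩
  · -- interior pendants avoid the two end edges
    intro i hi1 hi2
    have hilen : i < Q.len := by rw [hQlen]; omega
    refine ⟨mem_verts_u (by omega) (by rw [hQlen]; omega), ?_, ?_⟩
    · exact u_not_mem_edgeAt hQpath (by rw [hQlen]; omega) hilen (by omega)
    · apply u_not_mem_edgeAt hQpath (by rw [hQlen]; omega : Q.len - 1 < Q.len) hilen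
      rw [hQlen]
      omega

end Stmt10Aux


open Stmt10Aux in
open scoped Classical in
/-- Lemma A.2: if `T` is a hypertree with at most `ℓ` leaf edges and
`ℓ, m ≥ 2`, then there are pairwise edge-disjoint semi-bare paths `P₁, …, P_s` in `T`,
each of length `m+1`, such that after removing from `T` all vertices of each path except
those lying in its first and last edges (the edges containing its end pairs), at most
`6mℓ + 2e(T)/(m+1)` edges remain. -/
theorem stmt_10 (ℓ m : ℕ) (hℓ : 2 ≤ ℓ) (hm : 2 ≤ m)
    (V : Type) [DecidableEq V] [Fintype V]
    (T : Finset (Finset V)) (hT : IsHypertree T)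
    (hleaves : (T.filter fun e => ∃ x ∈ e, IsLeaf T x).card ≤ ℓ) :
    ∃ (s : ℕ) (P : Fin s → HPath V),
      (∀ k, (P k).len = m + 1 ∧ (P k).IsPathIn T ∧
        -- `P k` is semi-bare in `T`: every edge of `T` outside `P k` meets `V(P k)`
        -- only in the end pairs `{v 0, u 1}` and `{u len, v len}`
        (∀ e ∈ T, e ∉ (P k).edgeSet → ∀ x ∈ e, x ∈ (P k).verts →
          x ∈ ({(P k).v 0, (P k).u 1, (P k).u (P k).len, (P k).v (P k).len} :
            Finset V))) ∧
      -- the paths are pairwise edge-disjoint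
      (∀ k k' : Fin s, k ≠ k' → Disjoint ((P k).edgeSet) ((P k').edgeSet)) ∧
      -- removing, from each path, all of its vertices except those in the two edges
      -- containing its end pairs, few edges of `T` remain
      (((T.filter fun e => ∀ x ∈ e,
            x ∉ Finset.univ.biUnion fun k : Fin s =>
              (P k).verts \ ((P k).edgeAt 0 ∪ (P k).edgeAt ((P k).len - 1))).card : ℝ)
        ≤ 6 * m * ℓ + 2 * (T.card : ℝ) / (m + 1)) := by
  classical
  have hm1 : (0:ℝ) < (m:ℝ) + 1 := by positivity
  by_cases hsmall : (T.card : ℝ) ≤ 6 * m * ℓ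
  · refine ⟨0, Fin.elim0, fun k => k.elim0, fun k k' _ => k.elim0, ?_⟩
    have h1 : (T.filter fun e => ∀ x ∈ e,
          x ∉ Finset.univ.biUnion fun k : Fin 0 =>
            (Fin.elim0 k : HPath V).verts \ ((Fin.elim0 k : HPath V).edgeAt 0 ∪
              (Fin.elim0 k : HPath V).edgeAt ((Fin.elim0 k : HPath V).len - 1))) = T := by
      apply Finset.filter_true_of_mem
      intro e _ x _
      simp
    rw [h1]
    have hpos : (0:ℝ) ≤ 2 * (T.card:ℝ) / ((m:ℝ) + 1) := by positivity
    linarith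
  · push_neg at hsmall
    have hm2 : (2:ℝ) ≤ (m:ℝ) := by exact_mod_cast hm
    have hl2 : (2:ℝ) ≤ (ℓ:ℝ) := by exact_mod_cast hℓ
    have hk2 : 2 ≤ T.card := by
      have h24 : (24:ℝ) ≤ 6 * (m:ℝ) * (ℓ:ℝ) := by nlinarith
      have : (2:ℝ) ≤ (T.card:ℝ) := by linarith
      exact_mod_cast this
    obtain ⟨e₀, he₀⟩ := Finset.card_pos.mp (by omega : 0 < T.card)
    obtain ⟨v₀, _⟩ := Finset.card_pos.mp (by rw [hT.1 e₀ he₀]; omega : 0 < e₀.card)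
    have : Nonempty V := ⟨v₀⟩
    have hsub := isSubtree_of_isHypertree hT
    have h3 := hsub.1
    have hleaf : (leafEdges T).card ≤ ℓ := by
      rw [← leafEdges_eq T]; exact hleaves
    obtain ⟨hN4, hS4⟩ := main_counts T hsub hk2
    -- ### the set of chain starts
    set S : Finset (Finset V × V) :=
      ((CEdges T) ×ˢ (hVerts T)).filter (fun s => IsStart T s) with hSdef
    have hSmem : ∀ s, s ∈ S ↔ IsStart T s := by
      intro s
      rw [hSdef, Finset.mem_filter, Finset.mem_product]
      constructor
      · tauto
      · intro h
        exact ⟨⟨h.1.1, mem_hVerts (CE_subset T h.1.1) h.1.2.1⟩, h⟩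
    -- ### S is small : injection into degree-2 slots of non-chain edges
    have hScard : S.card ≤ 4 * ℓ := by
      set W : Finset (Finset V × V) := (T \ CEdges T).biUnion
        (fun f => (f.filter (fun x => degH T x = 2)).image (fun x => (f, x))) with hWdef
      have hmap : ∀ s ∈ S, (nextE T s.1 s.2, s.2) ∈ W := by
        intro s hs
        obtain ⟨⟨hsCE, hsx, hsd⟩, hnot⟩ := (hSmem s).mp hs
        obtain ⟨hg1, hg2, hg3, -⟩ := nextE_spec (CE_subset T hsCE) hsx hsd
        rw [hWdef]
        apply Finset.mem_biUnion.mpr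
        refine ⟨nextE T s.1 s.2, Finset.mem_sdiff.mpr ⟨hg1, hnot⟩, ?_⟩
        exact Finset.mem_image.mpr ⟨s.2, Finset.mem_filter.mpr ⟨hg2, hsd⟩, rfl⟩
      have hinj : Set.InjOn (fun s : Finset V × V => (nextE T s.1 s.2, s.2)) ↑S := by
        intro s hs s' hs' heq
        obtain ⟨⟨hsCE, hsx, hsd⟩, -⟩ := (hSmem s).mp hs
        obtain ⟨⟨hsCE', hsx', hsd'⟩, -⟩ := (hSmem s').mp hs'
        simp only [Prod.mk.injEq] at heq
        obtain ⟨hfst, hsnd⟩ := heq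
        obtain ⟨hg1, hg2, hg3, -⟩ := nextE_spec (CE_subset T hsCE) hsx hsd
        obtain ⟨hg1', hg2', hg3', -⟩ := nextE_spec (CE_subset T hsCE') hsx' hsd'
        have hxs : s.2 ∈ s'.1 := by rw [hsnd]; exact hsx'
        rcases eq_or_eq_of_deg_two hsd (CE_subset T hsCE) hg1 (Ne.symm hg3) hsx hg2
          (CE_subset T hsCE') hxs with h | h
        · exact Prod.ext h.symm hsnd
        · exfalso
          apply hg3'
          rw [← hfst, ← h]
      have h1 := Finset.card_le_card_of_injOn _ hmap hinj
      have h2 : W.card ≤ ∑ f ∈ T \ CEdges T, (f.filter fun x => degH T x = 2).card := by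
        rw [hWdef]
        calc ((T \ CEdges T).biUnion _).card
            ≤ ∑ f ∈ T \ CEdges T,
              ((f.filter (fun x => degH T x = 2)).image (fun x => (f, x))).card :=
              Finset.card_biUnion_le
          _ ≤ _ := Finset.sum_le_sum (fun f _ => Finset.card_image_le)
      omega
    -- ### transversal of the chain-direction involution
    obtain ⟨R, hRsub, hRcov, hRpair⟩ := exists_transversal S.card S (endState T) rfl
      (fun s hs => (hSmem _).mpr (endState_isStart hsub ((hSmem s).mp hs).1))
      (fun s hs => endState_endState hsub ((hSmem s).mp hs))
      (fun s hs => endState_ne hsub ((hSmem s).mp hs).1)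
    have hRstart : ∀ st ∈ R, IsStart T st := fun st hst => (hSmem st).mp (hRsub hst)
    have hRgood : ∀ st ∈ R, GoodS T st := fun st hst => (hRstart st hst).1
    -- 2 |R| ≤ |S|
    have hR2 : 2 * R.card ≤ 4 * ℓ := by
      have hdisj : Disjoint R (R.image (endState T)) := by
        rw [Finset.disjoint_right]
        intro y hy hyR
        obtain ⟨x, hx, rfl⟩ := Finset.mem_image.mp hy
        exact hRpair x hx hyR
      have himcard : (R.image (endState T)).card = R.card := by
        apply Finset.card_image_of_injOn
        intro x hx y hy hxy
        have := congrArg (endState T) hxy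
        rw [endState_endState hsub (hRstart x hx), endState_endState hsub (hRstart y hy)] at this
        exact this
      have hsubS : R ∪ R.image (endState T) ⊆ S := by
        intro x hx
        rcases Finset.mem_union.mp hx with h | h
        · exact hRsub h
        · obtain ⟨y, hy, rfl⟩ := Finset.mem_image.mp h
          exact (hSmem _).mpr (endState_isStart hsub (hRgood y hy))
      have := Finset.card_le_card hsubS
      rw [Finset.card_union_of_disjoint hdisj, himcard] at this
      omega
    -- ### chain edges decompose along R
    have hCEcover : CEdges T = R.biUnion (fun st => chainE T st) := by
      apply Finset.Subset.antisymm
      · intro e he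
        obtain ⟨s, hsSt, hse⟩ := chain_cover hsub he
        rcases hRcov s ((hSmem s).mpr hsSt) with h | h
        · exact Finset.mem_biUnion.mpr ⟨s, h, hse⟩
        · refine Finset.mem_biUnion.mpr ⟨endState T s, h, ?_⟩
          rw [chainE_endState hsub hsSt]
          exact hse
      · intro e he
        obtain ⟨st, hst, hest⟩ := Finset.mem_biUnion.mp he
        exact chainE_subset_CE hsub st hest
    have hchaindisj : ∀ st ∈ R, ∀ st' ∈ R, st ≠ st' →
        Disjoint (chainE T st) (chainE T st') := by
      intro st hst st' hst' hne
      rw [Finset.disjoint_left]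
      intro f hf hf'
      rcases chain_overlap hsub (hRstart st hst) (hRstart st' hst') hf hf' with h | h
      · exact hne h.symm
      · rw [h] at hst'
        exact hRpair st hst hst'
    have hCEcard : (CEdges T).card = ∑ st ∈ R, cntS T st := by
      rw [hCEcover, Finset.card_biUnion hchaindisj]
      exact Finset.sum_congr rfl (fun st hst => chainE_card hsub (hRgood st hst))
    -- ### the family of paths
    set D : Finset ((_ : Finset V × V) × ℕ) :=
      R.sigma (fun st => Finset.range (cntS T st / (m + 1))) with hDdef
    have hDcard : D.card = ∑ st ∈ R, cntS T st / (m + 1) := by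
      rw [hDdef, Finset.card_sigma]
      exact Finset.sum_congr rfl (fun st _ => Finset.card_range _)
    have hDmem : ∀ d : ((_ : Finset V × V) × ℕ), d ∈ D ↔
        d.1 ∈ R ∧ d.2 < cntS T d.1 / (m + 1) := by
      intro d
      rw [hDdef, Finset.mem_sigma, Finset.mem_range]
    have hwindow : ∀ (st : Finset V × V) (t : ℕ), st ∈ R → t < cntS T st / (m + 1) →
        t * (m + 1) + m ≤ cntS T st - 1 := by
      intro st t hst ht
      have h1 : t + 1 ≤ cntS T st / (m + 1) := ht
      have h2 : (t + 1) * (m + 1) ≤ (cntS T st / (m + 1)) * (m + 1) :=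
        Nat.mul_le_mul_right _ h1
      have h3 : (cntS T st / (m + 1)) * (m + 1) ≤ cntS T st := Nat.div_mul_le_self _ _
      have h4 : (t + 1) * (m + 1) = t * (m + 1) + m + 1 := by ring
      omega
    have hex : ∀ k : Fin D.card, ∃ Q : HPath V, Q.IsPathIn T ∧ Q.len = m + 1 ∧
        Q.edgeSet = (Finset.range (m + 1)).image
          (fun i => (walkS T ((D.equivFin.symm k).1.1)
            ((D.equivFin.symm k).1.2 * (m + 1) + i)).1) ∧
        (∀ e ∈ T, e ∉ Q.edgeSet → ∀ x ∈ e, x ∈ Q.verts →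
          x ∈ ({Q.v 0, Q.u 1, Q.u Q.len, Q.v Q.len} : Finset V)) ∧
        (∀ i, 1 ≤ i → i ≤ m - 1 → Q.u (i + 1) ∈ Q.verts ∧
          Q.u (i + 1) ∉ Q.edgeAt 0 ∧ Q.u (i + 1) ∉ Q.edgeAt (Q.len - 1)) := by
      intro k
      set d := (D.equivFin.symm k).1 with hd
      have hdD : d ∈ D := (D.equivFin.symm k).2
      have hdR := ((hDmem d).mp hdD).1
      have hdt := ((hDmem d).mp hdD).2
      exact segment_path hsub (by omega : 1 ≤ m) (hRgood d.1 hdR)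
        (hwindow d.1 d.2 hdR hdt)
    choose P hP using hex
    have hPdisj : ∀ k k' : Fin D.card, k ≠ k' →
        Disjoint ((P k).edgeSet) ((P k').edgeSet) := by
      intro k k' hkk'
      have hdne : (D.equivFin.symm k).1 ≠ (D.equivFin.symm k').1 := by
        intro h
        apply hkk'
        have h1 := Subtype.ext h
        have h2 := congrArg D.equivFin h1
        rw [Equiv.apply_symm_apply, Equiv.apply_symm_apply] at h2
        exact h2
      set d := (D.equivFin.symm k).1 with hd
      set d' := (D.equivFin.symm k').1 with hd'
      have hdD : d ∈ D := (D.equivFin.symm k).2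
      have hdD' : d' ∈ D := (D.equivFin.symm k').2
      have hdR := ((hDmem d).mp hdD).1
      have hdt := ((hDmem d).mp hdD).2
      have hdR' := ((hDmem d').mp hdD').1
      have hdt' := ((hDmem d').mp hdD').2
      rw [Finset.disjoint_left]
      intro f hf hf'
      rw [(hP k).2.2.1] at hf
      rw [(hP k').2.2.1] at hf'
      obtain ⟨i, hi, hieq⟩ := Finset.mem_image.mp hf
      obtain ⟨i', hi', hieq'⟩ := Finset.mem_image.mp hf'
      rw [Finset.mem_range] at hi hi'
      have hwin := hwindow d.1 d.2 hdR hdt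
      have hwin' := hwindow d'.1 d'.2 hdR' hdt'
      have hcp := cnt_pos hsub (hRgood d.1 hdR)
      have hcp' := cnt_pos hsub (hRgood d'.1 hdR')
      by_cases hstq : d.1 = d'.1
      · -- same chain, different windows
        have htne : d.2 ≠ d'.2 := by
          intro h
          exact hdne (Sigma.ext hstq (heq_of_eq h))
        have hidxne : d.2 * (m + 1) + i ≠ d'.2 * (m + 1) + i' := by
          have e1 : d.2 * (m+1) + (m+1) = (d.2+1) * (m+1) := by ring
          have e2 : d'.2 * (m+1) + (m+1) = (d'.2+1) * (m+1) := by ring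
          rcases lt_or_gt_of_ne htne with h | h
          · have : (d.2 + 1) * (m+1) ≤ d'.2 * (m+1) := by
              apply Nat.mul_le_mul_right
              omega
            omega
          · have : (d'.2 + 1) * (m+1) ≤ d.2 * (m+1) := by
              apply Nat.mul_le_mul_right
              omega
            omega
        have hdist := (chain_distinct hsub (cntS T d.1 - 1) (walkS T d.1)
          (walk_chainSeq hsub (hRgood d.1 hdR))).1
        rw [← hstq] at hieq'
        have hα : d.2 * (m + 1) + i ≤ cntS T d.1 - 1 := by omega
        have hα' : d'.2 * (m + 1) + i' ≤ cntS T d.1 - 1 := by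
          rw [hstq]; omega
        rcases lt_or_gt_of_ne hidxne with h | h
        · exact hdist _ _ hα hα' h (hieq.trans hieq'.symm)
        · exact hdist _ _ hα' hα h (hieq'.trans hieq.symm)
      · -- different chains
        have hfc : f ∈ chainE T d.1 := by
          rw [chainE]
          exact Finset.mem_image.mpr ⟨d.2 * (m+1) + i, Finset.mem_range.mpr (by omega), hieq⟩
        have hfc' : f ∈ chainE T d'.1 := by
          rw [chainE]
          exact Finset.mem_image.mpr ⟨d'.2 * (m+1) + i', Finset.mem_range.mpr (by omega), hieq'⟩
        rcases chain_overlap hsub (hRstart d.1 hdR) (hRstart d'.1 hdR') hfc hfc' with h | h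
        · exact hstq h.symm
        · rw [h] at hdR'
          exact hRpair d.1 hdR hdR'
    refine ⟨D.card, P, ?_, hPdisj, ?_⟩
    · intro k
      exact ⟨(hP k).2.1, (hP k).1, (hP k).2.2.2.1⟩
    · -- ### the counting bound
      set fS : Finset (Finset V) := T.filter fun e => ∀ x ∈ e,
        x ∉ Finset.univ.biUnion fun k : Fin D.card =>
          (P k).verts \ ((P k).edgeAt 0 ∪ (P k).edgeAt ((P k).len - 1)) with hfSdef
      set Mid : Finset (Finset V) := Finset.univ.biUnion
        (fun k : Fin D.card => (Finset.Icc 1 (m-1)).image (fun i => (P k).edgeAt i)) with hMid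
      have hMidSub : ∀ k : Fin D.card, ∀ i, 1 ≤ i → i ≤ m - 1 →
          (P k).edgeAt i ∈ (P k).edgeSet := by
        intro k i hi1 hi2
        exact mem_edgeSet_iff.mpr ⟨i, by rw [(hP k).2.1] at *; omega, rfl⟩
      have hMidT : Mid ⊆ T := by
        intro f hf
        rw [hMid] at hf
        obtain ⟨k, -, hf2⟩ := Finset.mem_biUnion.mp hf
        obtain ⟨i, hi, rfl⟩ := Finset.mem_image.mp hf2
        rw [Finset.mem_Icc] at hi
        exact edgeSet_subset (hP k).1 (hMidSub k i hi.1 hi.2)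
      have hMidOut : ∀ f ∈ Mid, f ∉ fS := by
        intro f hf hffS
        rw [hMid] at hf
        obtain ⟨k, -, hf2⟩ := Finset.mem_biUnion.mp hf
        obtain ⟨i, hi, rfl⟩ := Finset.mem_image.mp hf2
        rw [Finset.mem_Icc] at hi
        obtain ⟨hu1, hu2, hu3⟩ := (hP k).2.2.2.2 i hi.1 hi.2
        rw [hfSdef, Finset.mem_filter] at hffS
        apply hffS.2 ((P k).u (i+1)) (mem_edgeAt_mid (P k) i)
        apply Finset.mem_biUnion.mpr
        refine ⟨k, Finset.mem_univ k, ?_⟩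
        apply Finset.mem_sdiff.mpr
        refine ⟨hu1, ?_⟩
        rw [Finset.mem_union]
        push_neg
        exact ⟨hu2, hu3⟩
      have hMidCard : Mid.card = D.card * (m - 1) := by
        rw [hMid, Finset.card_biUnion]
        · have : ∀ k : Fin D.card,
              ((Finset.Icc 1 (m-1)).image (fun i => (P k).edgeAt i)).card = m - 1 := by
            intro k
            rw [Finset.card_image_of_injOn, Nat.card_Icc]
            · omega
            · intro a ha b hb hab
              rw [Finset.coe_Icc, Set.mem_Icc] at ha hb
              by_contra hne
              have hlen := (hP k).2.1
              exact edgeAt_injOn (hP k).1 (by omega) (by omega) hne hab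
          rw [Finset.sum_congr rfl (fun k _ => this k), Finset.sum_const, smul_eq_mul,
            Finset.card_univ, Fintype.card_fin]
        · intro k _ k' _ hkk'
          have hdisj : Disjoint ((P k).edgeSet) ((P k').edgeSet) := hPdisj k k' hkk'
          rw [Function.onFun, Finset.disjoint_left]
          intro f hf hf'
          obtain ⟨i, hi, rfl⟩ := Finset.mem_image.mp hf
          obtain ⟨i', hi', hieq'⟩ := Finset.mem_image.mp hf'
          rw [Finset.mem_Icc] at hi hi'
          have h1 := hMidSub k i hi.1 hi.2
          have h2 := hMidSub k' i' hi'.1 hi'.2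
          rw [hieq'] at h2
          exact (Finset.disjoint_left.mp hdisj h1) h2
      -- counting
      have hfsT : fS ⊆ T := Finset.filter_subset _ _
      have hA : fS.card + D.card * (m - 1) ≤ T.card := by
        rw [← hMidCard]
        have hdisj : Disjoint fS Mid := by
          rw [Finset.disjoint_left]
          intro f hf hf'
          exact hMidOut f hf' hf
        rw [← Finset.card_union_of_disjoint hdisj]
        apply Finset.card_le_card
        intro f hf
        rcases Finset.mem_union.mp hf with h | h
        · exact hfsT h
        · exact hMidT h
      have hB : (CEdges T).card ≤ (m + 1) * D.card + m * R.card := by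
        rw [hCEcard, hDcard]
        calc ∑ st ∈ R, cntS T st
            ≤ ∑ st ∈ R, ((m + 1) * (cntS T st / (m + 1)) + m) := by
              apply Finset.sum_le_sum
              intro st _
              have h1 := Nat.div_add_mod (cntS T st) (m + 1)
              have h2 : cntS T st % (m + 1) < m + 1 := Nat.mod_lt _ (by omega)
              omega
          _ = (m + 1) * (∑ st ∈ R, cntS T st / (m + 1)) + m * R.card := by
              rw [Finset.sum_add_distrib, Finset.mul_sum, Finset.sum_const, smul_eq_mul,
                mul_comm m R.card]
      have hsdiff : (T \ CEdges T).card + (CEdges T).card = T.card :=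
        Finset.card_sdiff_add_card_eq_card (CE_subset T)
      -- pass to the reals
      have hmul : D.card * m = D.card * (m - 1) + D.card := by
        have h' : m - 1 + 1 = m := by omega
        calc D.card * m = D.card * ((m - 1) + 1) := by rw [h']
          _ = D.card * (m - 1) + D.card := by ring
      have hA' : fS.card + D.card * m ≤ T.card + D.card := by omega
      have r1 : (fS.card : ℝ) + (D.card : ℝ) * (m : ℝ) ≤ (T.card : ℝ) + (D.card : ℝ) := by
        exact_mod_cast hA'
      have r2 : ((CEdges T).card : ℝ) ≤ ((m:ℝ) + 1) * (D.card:ℝ) + (m:ℝ) * (R.card:ℝ) := by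
        exact_mod_cast hB
      have r3 : 2 * (R.card : ℝ) ≤ 4 * (ℓ:ℝ) := by exact_mod_cast hR2
      have r4 : ((T \ CEdges T).card : ℝ) + ((CEdges T).card : ℝ) = (T.card : ℝ) := by
        exact_mod_cast hsdiff
      have r5 : ((T \ CEdges T).card : ℝ) ≤ 4 * (ℓ:ℝ) := by
        have : (T \ CEdges T).card ≤ 4 * ℓ := le_trans hN4 (by omega)
        exact_mod_cast this
      set F := (fS.card:ℝ) with hFs
      set Dc := (D.card:ℝ) with hDc
      set K := (T.card:ℝ) with hK
      set C := ((CEdges T).card:ℝ) with hC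
      set N' := ((T \ CEdges T).card:ℝ) with hN'
      set Rc := (R.card:ℝ) with hRc
      set M := (m:ℝ) with hM
      set L := (ℓ:ℝ) with hL
      have e1 := mul_le_mul_of_nonneg_right r1 (le_of_lt hm1)
      have e2 := mul_le_mul_of_nonneg_left r2 (by linarith : (0:ℝ) ≤ M - 1)
      have e4 : (M-1)*N' + (M-1)*C = (M-1)*K := by rw [← mul_add, r4]
      have e5 := mul_le_mul_of_nonneg_left r5 (by linarith : (0:ℝ) ≤ M - 1)
      have e6 := mul_le_mul_of_nonneg_left r3
        (by nlinarith : (0:ℝ) ≤ M*(M-1)/2)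
      have e7 : (0:ℝ) ≤ M*M*L := by positivity
      have e8 : (0:ℝ) ≤ M*L := by positivity
      have e9 : (0:ℝ) ≤ L := by positivity
      have key : F * (M+1) ≤ 6*M*L*(M+1) + 2*K := by
        linarith [e1, e2, e4, e5, e6, e7, e8, e9]
      have hfinal : F - 6*M*L ≤ 2 * K / (M + 1) := by
        rw [le_div_iff₀ hm1]
        linarith [key]
      linarith [hfinal]
end

section
/- Every hypertree with at least two edges has an even number of leaves. -/
/-! Common definitions for 3-uniform hypergraphs, given as a finite set of edges
(each edge a 3-element `Finset`) on a vertex type `V`. -/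

variable {V : Type*}

/-- A degree-one vertex lies in a unique edge. -/
lemma deg_one_unique_edge [DecidableEq V] {T : Finset (Finset V)} {x : V}
    (hx : degH T x = 1) {e f : Finset V} (he : e ∈ T) (hf : f ∈ T)
    (hxe : x ∈ e) (hxf : x ∈ f) : e = f := by
  have h1 : e ∈ T.filter fun g => x ∈ g := Finset.mem_filter.2 ⟨he, hxe⟩
  have h2 : f ∈ T.filter fun g => x ∈ g := Finset.mem_filter.2 ⟨hf, hxf⟩
  exact Finset.card_le_one.1 (le_of_eq hx) _ h1 _ h2

/-- In a hypertree with at least two edges, no edge has all three vertices of degree one. -/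
lemma not_all_deg_one [DecidableEq V] {T : Finset (Finset V)}
    (hT : IsHypertree T) (h2 : 2 ≤ T.card) {e : Finset V} (he : e ∈ T) :
    ∃ v ∈ e, degH T v ≠ 1 := by
  by_contra hcon
  push_neg at hcon
  -- get another edge f ≠ e and a vertex w ∈ f \ e
  obtain ⟨f, hf, hfe⟩ := Finset.exists_mem_ne (lt_of_lt_of_le one_lt_two h2) e
  have hcard : ∀ g ∈ T, g.card = 3 := hT.1
  have hnsub : ¬ f ⊆ e := by
    intro hsub
    exact hfe (Finset.eq_of_subset_of_card_le hsub (by rw [hcard e he, hcard f hf]))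
  obtain ⟨w, hwf, hwe⟩ := Finset.not_subset.1 hnsub
  obtain ⟨x, hxe⟩ := Finset.card_pos.1 (by rw [hcard e he]; omega)
  have hxw : x ≠ w := fun h => hwe (h ▸ hxe)
  obtain ⟨⟨P, hP, hC⟩, -⟩ := hT.2.2 x w hxw
  obtain ⟨hlen, ha, hb⟩ := hC
  obtain ⟨hedges, hvinj, huinj, hvu⟩ := hP
  have he0 : P.edgeAt 0 ∈ T := hedges 0 (by omega)
  have hxe0 : x ∈ P.edgeAt 0 := by
    rcases ha with h | h <;> simp [HPath.edgeAt, h]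
  have he0e : P.edgeAt 0 = e :=
    deg_one_unique_edge (hcon x hxe) he0 he hxe0 hxe
  -- case on length
  rcases Nat.lt_or_ge P.len 2 with hl | hl
  · -- len = 1, so w ∈ edgeAt 0 = e, contradiction
    have hlen1 : P.len = 1 := by omega
    have hwe0 : w ∈ P.edgeAt 0 := by
      rcases hb with h | h <;> rw [hlen1] at h <;> simp [HPath.edgeAt, h]
    exact hwe (he0e ▸ hwe0)
  · -- len ≥ 2
    have he1 : P.edgeAt 1 ∈ T := hedges 1 (by omega)
    have hv1e0 : P.v 1 ∈ P.edgeAt 0 := by simp [HPath.edgeAt]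
    have hv1e1 : P.v 1 ∈ P.edgeAt 1 := by simp [HPath.edgeAt]
    have hdv1 : degH T (P.v 1) = 1 := hcon _ (he0e ▸ hv1e0)
    have he1e : P.edgeAt 1 = e := deg_one_unique_edge hdv1 he1 he hv1e1 (he0e ▸ hv1e0)
    have hv0 : P.v 0 ∈ P.edgeAt 1 := by
      rw [he1e, ← he0e]; simp [HPath.edgeAt]
    simp only [HPath.edgeAt, Finset.mem_insert, Finset.mem_singleton] at hv0
    rcases hv0 with h | h | h
    · have : (0 : ℕ) = 1 := hvinj (by simp) (by simp [Set.mem_Iic]; omega) h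
      omega
    · exact hvu 0 (by omega) 2 (by omega) (by omega) h
    · have : (0 : ℕ) = 2 := hvinj (by simp) (by simp [Set.mem_Iic]; omega) h
      omega

/-- every hypertree with at least two edges has an even number of
leaves. -/
theorem stmt_12 (V : Type) [DecidableEq V] [Fintype V]
    (T : Finset (Finset V)) (hT : IsHypertree T) (h2 : 2 ≤ T.card) :
    Even {x : V | IsLeaf T x}.ncard := by
  classical
  set F : Finset (Finset V) := T.filter (fun e => ∃ x ∈ e, IsLeaf T x) with hF
  set B : Finset V := F.biUnion (fun e => e.filter fun v => degH T v = 1) with hB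
  -- each leaf edge contains exactly two degree-one vertices
  have hcard2 : ∀ e ∈ F, (e.filter fun v => degH T v = 1).card = 2 := by
    intro e heF
    obtain ⟨heT, x, hxe, hxdeg, e', he'T, hxe', y, hye', hyx, hydeg⟩ :=
      Finset.mem_filter.1 heF
    have hee' : e = e' := deg_one_unique_edge hxdeg heT he'T hxe hxe'
    subst hee'
    have hge : 2 ≤ (e.filter fun v => degH T v = 1).card := by
      apply Finset.one_lt_card.2
      exact ⟨y, Finset.mem_filter.2 ⟨hye', hydeg⟩, x, Finset.mem_filter.2 ⟨hxe, hxdeg⟩, hyx⟩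
    have hle : (e.filter fun v => degH T v = 1).card ≤ e.card := Finset.card_filter_le _ _
    have he3 : e.card = 3 := hT.1 e heT
    have hne3 : (e.filter fun v => degH T v = 1).card ≠ 3 := by
      intro h3
      have heq : (e.filter fun v => degH T v = 1) = e :=
        Finset.eq_of_subset_of_card_le (Finset.filter_subset _ _) (by omega)
      obtain ⟨v, hv, hvd⟩ := not_all_deg_one hT h2 heT
      rw [← heq] at hv
      exact hvd (Finset.mem_filter.1 hv).2
    omega
  -- the set of leaves is exactly B
  have hset : {x : V | IsLeaf T x} = ↑B := by
    ext x
    simp only [Set.mem_setOf_eq, hB, Finset.mem_coe, Finset.mem_biUnion, Finset.mem_filter]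
    constructor
    · rintro ⟨hxdeg, e, heT, hxe, y, hye, hyx, hydeg⟩
      refine ⟨e, Finset.mem_filter.2 ⟨heT, x, hxe, hxdeg, e, heT, hxe, y, hye, hyx, hydeg⟩,
        hxe, hxdeg⟩
    · rintro ⟨e, heF, hxe, hxdeg⟩
      have h2c := hcard2 e heF
      obtain ⟨y, hy, hyx⟩ := Finset.exists_mem_ne (by omega :
        1 < (e.filter fun v => degH T v = 1).card) x
      obtain ⟨hye, hydeg⟩ := Finset.mem_filter.1 hy
      have heT := (Finset.mem_filter.1 heF).1
      exact ⟨hxdeg, e, heT, hxe, y, hye, hyx, hydeg⟩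
  rw [hset, Set.ncard_coe_finset, hB, Finset.card_biUnion]
  · refine ⟨F.card, ?_⟩
    rw [Finset.sum_congr rfl hcard2, Finset.sum_const, smul_eq_mul]; ring
  · intro e heF f hfF hef
    rw [Function.onFun, Finset.disjoint_left]
    intro v hv hv'
    obtain ⟨hve, hvd⟩ := Finset.mem_filter.1 hv
    obtain ⟨hvf, -⟩ := Finset.mem_filter.1 hv'
    exact hef (deg_one_unique_edge hvd (Finset.mem_filter.1 heF).1
      (Finset.mem_filter.1 hfF).1 hve hvf)
end
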